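/- arXiv:1512.09080 — 3 statements merged into one kernel-verified Lean document; each statement's English description precedes it below -/
import Mathlib

section
/- Let N be a positive integer and s, t > 0 with s ≠ t. Then the probability that a binomial random variable with N² trials and success probability s/N equals ⌊tN⌋ satisfies: the negative logarithm of this probability equals (s - t + t·ln(t/s))·N + O(ln N) as N → ∞ (with s fixed and s/N ≤ 1). -/
/-- `|log(1-x) + x| ≤ 2 x²` for `0 ≤ x ≤ 1/2`. -/
lemma log_one_sub_bound {x : ℝ} (h0 : 0 ≤ x) (h : x ≤ 1/2) :
    |Real.log (1 - x) + x| ≤ 2 * x ^ 2 := by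
  have hx1 : |x| < 1 := by rw [abs_of_nonneg h0]; linarith
  have := Real.abs_log_sub_add_sum_range_le hx1 1
  simp only [Finset.sum_range_one, pow_one, Nat.cast_zero, zero_add, div_one] at this
  rw [abs_of_nonneg h0] at this
  have h2 : x ^ 2 / (1 - x) ≤ 2 * x ^ 2 := by
    rw [div_le_iff₀ (by linarith)]
    nlinarith [sq_nonneg x]
  calc |Real.log (1 - x) + x| = |x + Real.log (1 - x)| := by rw [add_comm]
    _ ≤ x ^ (1+1) / (1 - x) := this
    _ ≤ 2 * x ^ 2 := h2

/-- Stirling-type bound for `log n!`. -/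
lemma stirling_log_factorial :
    ∃ c : ℝ, 0 ≤ c ∧ ∀ n : ℕ, 1 ≤ n →
      |Real.log (n.factorial : ℝ) - ((n : ℝ) * Real.log n - n)| ≤ Real.log n + c := by
  obtain ⟨c₁, hc₁⟩ : ∃ c : ℝ, ∀ n : ℕ, c ≤ Real.log (Stirling.stirlingSeq (n + 1)) :=
    ⟨_, Stirling.log_stirlingSeq_bounded_by_constant⟩
  set c₂ : ℝ := |c₁| + |Real.log (Stirling.stirlingSeq 1)| with hc₂def
  have hc₂ : 0 ≤ c₂ := by positivity
  refine ⟨c₂ + 1, by linarith, ?_⟩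
  rintro n hn
  obtain ⟨k, rfl⟩ := Nat.exists_eq_add_of_le hn
  set n := 1 + k with hndef
  have hn1 : 1 ≤ n := hn
  have hnR : (1:ℝ) ≤ n := by exact_mod_cast hn1
  have hlogn : 0 ≤ Real.log n := Real.log_nonneg hnR
  -- bound on |log stirlingSeq n|
  have hlow : c₁ ≤ Real.log (Stirling.stirlingSeq n) := by
    have := hc₁ k
    simpa [hndef, add_comm] using this
  have hup : Real.log (Stirling.stirlingSeq n) ≤ Real.log (Stirling.stirlingSeq 1) := by
    have := Stirling.log_stirlingSeq'_antitone (Nat.zero_le k)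
    simpa [hndef, Function.comp, add_comm] using this
  have habs : |Real.log (Stirling.stirlingSeq n)| ≤ c₂ := by
    rw [abs_le]
    constructor
    · have : -|c₁| ≤ c₁ := neg_abs_le c₁
      have h2 : (0:ℝ) ≤ |Real.log (Stirling.stirlingSeq 1)| := abs_nonneg _
      rw [hc₂def]; linarith
    · have : Real.log (Stirling.stirlingSeq 1) ≤ |Real.log (Stirling.stirlingSeq 1)| := le_abs_self _
      have h2 : (0:ℝ) ≤ |c₁| := abs_nonneg _
      rw [hc₂def]; linarith
  have hform := Stirling.log_stirlingSeq_formula n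
  have hne : (n:ℝ) ≠ 0 := by positivity
  have hlogdiv : Real.log ((n:ℝ) / Real.exp 1) = Real.log n - 1 := by
    rw [Real.log_div hne (Real.exp_ne_zero 1), Real.log_exp]
  have hlog2n : Real.log (2 * (n:ℝ)) = Real.log 2 + Real.log n :=
    Real.log_mul two_ne_zero hne
  have key : Real.log (n.factorial : ℝ) - ((n : ℝ) * Real.log n - n)
      = Real.log (Stirling.stirlingSeq n) + 1/2 * Real.log 2 + 1/2 * Real.log n := by
    have : Real.log (Stirling.stirlingSeq n)
        = Real.log (n.factorial : ℝ) - 1 / 2 * Real.log (2 * n) - n * Real.log ((n:ℝ) / Real.exp 1) :=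
      hform
    rw [hlog2n, hlogdiv] at this
    ring_nf at this ⊢
    linarith
  rw [key]
  have hlog2 : Real.log 2 ≤ 1 := by
    have := Real.log_le_sub_one_of_pos (by norm_num : (0:ℝ) < 2)
    linarith
  have hlog2' : 0 ≤ Real.log 2 := Real.log_nonneg (by norm_num)
  refine (abs_add_three _ _ _).trans ?_
  rw [abs_of_nonneg (mul_nonneg (by norm_num : (0:ℝ) ≤ 1/2) hlog2'),
    abs_of_nonneg (mul_nonneg (by norm_num : (0:ℝ) ≤ 1/2) hlogn)]
  linarith

set_option maxHeartbeats 1000000 in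
/-- Binomial point-probability estimate: for `s, t > 0`, `s ≠ t`,
`-ln P{Bin(N², s/N) = ⌊tN⌋} = (s - t + t·ln(t/s))·N + O(ln N)` as `N → ∞`
(over those `N` with `s/N ≤ 1`). -/
theorem binomial_point_estimate (s t : ℝ) (hs : 0 < s) (ht : 0 < t) (hst : s ≠ t) :
    ∃ C : ℝ, 0 < C ∧ ∀ᶠ N : ℕ in Filter.atTop,
      s / N ≤ 1 →
      |(-Real.log (((N ^ 2).choose ⌊t * (N : ℝ)⌋₊ : ℝ) * (s / N) ^ (⌊t * (N : ℝ)⌋₊)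
            * (1 - s / N) ^ (N ^ 2 - ⌊t * (N : ℝ)⌋₊)))
        - (s - t + t * Real.log (t / s)) * N| ≤ C * Real.log N := by
  obtain ⟨c₀, hc₀, hstir⟩ := stirling_log_factorial
  set K : ℝ := 2*t^2 + 2*|Real.log t| + c₀ + t*s + 2*s^2 + 3 + |Real.log s| with hK
  have hK0 : 0 ≤ K := by
    have h1 := abs_nonneg (Real.log t); have h2 := abs_nonneg (Real.log s)
    have h3 := sq_nonneg t; have h4 := sq_nonneg s; have h5 := (mul_pos ht hs).le
    linarith
  refine ⟨K + 1, by linarith, ?_⟩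
  have hcast := tendsto_natCast_atTop_atTop (R := ℝ)
  filter_upwards [hcast.eventually_ge_atTop 3, hcast.eventually_ge_atTop (2*s),
    hcast.eventually_ge_atTop (2*t), hcast.eventually_ge_atTop (2/t)] with N h3 h2s h2t h2dt _
  set m := ⌊t * (N:ℝ)⌋₊ with hmdef
  have hN0 : (0:ℝ) < N := by linarith
  have hNne : (N:ℝ) ≠ 0 := ne_of_gt hN0
  have htN0 : (0:ℝ) ≤ t * N := by positivity
  have htN2 : (2:ℝ) ≤ t * N := by
    rw [div_le_iff₀ ht] at h2dt; linarith [h2dt]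
  have hmle : (m:ℝ) ≤ t * N := Nat.floor_le htN0
  have hmgt : t * N < m + 1 := Nat.lt_floor_add_one _
  have hm1 : 1 ≤ m := Nat.le_floor (by push_cast; linarith)
  have hmR1 : (1:ℝ) ≤ m := by exact_mod_cast hm1
  have hm0R : (0:ℝ) < m := by linarith
  have hNsq : (N:ℝ)^2 = N*N := by ring
  have h2m : 2 * (m:ℝ) ≤ (N:ℝ)^2 := by
    have := mul_le_mul_of_nonneg_right h2t hN0.le
    linarith
  have hmn : m ≤ N^2 := by
    have : (m:ℝ) ≤ ((N^2 : ℕ):ℝ) := by push_cast; linarith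
    exact_mod_cast this
  have hcastsub : ((N^2 - m : ℕ):ℝ) = (N:ℝ)^2 - m := by
    push_cast [Nat.cast_sub hmn]; ring
  have hxle : s / N ≤ 1/2 := by rw [div_le_div_iff₀ hN0 (by norm_num)]; linarith
  have hx0 : 0 < s / N := by positivity
  have h1x : 0 < 1 - s/N := by linarith
  -- log of the product
  have hchoose : (0:ℝ) < ((N^2).choose m : ℝ) := by exact_mod_cast Nat.choose_pos hmn
  have hfac : (0:ℝ) < (m.factorial : ℝ) := by exact_mod_cast m.factorial_pos
  set lD := Real.log ((N^2).descFactorial m : ℝ) with hlDdef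
  set lF := Real.log (m.factorial : ℝ) with hlFdef
  set lN := Real.log (N:ℝ) with hlNdef
  have hDeq : ((N^2).descFactorial m : ℝ) = (m.factorial : ℝ) * ((N^2).choose m : ℝ) := by
    exact_mod_cast (Nat.descFactorial_eq_factorial_mul_choose (N^2) m)
  have hDpos : (0:ℝ) < ((N^2).descFactorial m : ℝ) := by rw [hDeq]; positivity
  have hlogchoose : Real.log ((N^2).choose m : ℝ) = lD - lF := by
    rw [hlDdef, hDeq, Real.log_mul hfac.ne' hchoose.ne', hlFdef]; ring
  have hlogP : Real.log (((N^2).choose m : ℝ) * (s/N)^m * (1 - s/N)^(N^2 - m))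
      = (lD - lF) + m * (Real.log s - lN) + ((N:ℝ)^2 - m) * Real.log (1 - s/N) := by
    rw [Real.log_mul (mul_pos hchoose (pow_pos hx0 m)).ne' (pow_pos h1x _).ne',
      Real.log_mul hchoose.ne' (pow_pos hx0 m).ne', Real.log_pow, Real.log_pow,
      hlogchoose, Real.log_div hs.ne' hNne, ← hcastsub, hlNdef]
  set A := lD - 2 * (m:ℝ) * lN with hAdef
  set B := lF - ((m:ℝ) * Real.log m - m) with hBdef
  set G := ((N:ℝ)^2 - m) * Real.log (1 - s/N) + s * N with hGdef
  set R := (m:ℝ) * Real.log m - m * lN - m - m * Real.log s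
      - (t*N*Real.log t - t*N - t*N*Real.log s) with hRdef
  -- the main algebraic identity
  have hE : -Real.log (((N^2).choose m : ℝ) * (s/N)^m * (1 - s/N)^(N^2 - m))
      - (s - t + t * Real.log (t / s)) * N = -A + B - G + R := by
    rw [hlogP, Real.log_div ht.ne' hs.ne', hAdef, hBdef, hGdef, hRdef]; ring
  -- bound A
  have hA : |A| ≤ 2*t^2 := by
    have hy0 : (0:ℝ) ≤ (m:ℝ)/(N:ℝ)^2 := by positivity
    have hyle : (m:ℝ)/(N:ℝ)^2 ≤ 1/2 := by
      rw [div_le_div_iff₀ (by positivity) (by norm_num)]; linarith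
    have hlog1y := log_one_sub_bound hy0 hyle
    have hsq : 2 * ((m:ℝ)/(N:ℝ)^2)^2 ≤ (m:ℝ)/(N:ℝ)^2 := by
      have h := mul_le_mul_of_nonneg_left hyle hy0
      have h2 : ((m:ℝ)/(N:ℝ)^2)^2 = ((m:ℝ)/(N:ℝ)^2) * ((m:ℝ)/(N:ℝ)^2) := sq _
      linarith
    have h1ylog : Real.log (1 - (m:ℝ)/(N:ℝ)^2) ≥ -2 * ((m:ℝ)/(N:ℝ)^2) := by
      have := abs_le.1 hlog1y; linarith [this.1]
    have h1yeq : 1 - (m:ℝ)/(N:ℝ)^2 = ((N:ℝ)^2 - m)/(N:ℝ)^2 := by field_simp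
    have hN2m : (0:ℝ) < (N:ℝ)^2 - m := by linarith
    have hlogsub : Real.log ((N:ℝ)^2 - m) = 2*lN + Real.log (1 - (m:ℝ)/(N:ℝ)^2) := by
      rw [h1yeq, Real.log_div hN2m.ne' (by positivity), hlNdef, Real.log_pow]
      push_cast; ring
    -- upper bound for lD
    have hDle : lD ≤ 2 * m * lN := by
      have h1 : ((N^2).descFactorial m : ℝ) ≤ ((N:ℝ)^2)^m := by
        calc ((N^2).descFactorial m : ℝ) ≤ (((N^2)^m : ℕ):ℝ) := by
              exact_mod_cast Nat.descFactorial_le_pow _ _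
          _ = ((N:ℝ)^2)^m := by push_cast; ring
      calc lD ≤ Real.log (((N:ℝ)^2)^m) := Real.log_le_log hDpos h1
        _ = 2 * m * lN := by
            rw [Real.log_pow, hlNdef, Real.log_pow]
            push_cast; ring
    -- lower bound for lD
    have hDge : 2 * m * lN - 2 * t^2 ≤ lD := by
      have h1 : ((N:ℝ)^2 - m)^m ≤ ((N^2).descFactorial m : ℝ) := by
        calc ((N:ℝ)^2 - m)^m ≤ (((N^2 + 1 - m : ℕ)):ℝ)^m := by
              have hc : (N:ℝ)^2 - m ≤ ((N^2 + 1 - m : ℕ):ℝ) := by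
                rw [Nat.cast_sub (by omega)]; push_cast; linarith
              exact pow_le_pow_left₀ (by linarith) hc m
          _ ≤ ((N^2).descFactorial m : ℝ) := by
              exact_mod_cast Nat.pow_sub_le_descFactorial (N^2) m
      have h2 : (m:ℝ) * Real.log ((N:ℝ)^2 - m) ≤ lD := by
        calc (m:ℝ) * Real.log ((N:ℝ)^2 - m) = Real.log (((N:ℝ)^2 - m)^m) := by
              rw [Real.log_pow]
          _ ≤ lD := Real.log_le_log (pow_pos hN2m m) h1
      have h3 : (m:ℝ) * Real.log ((N:ℝ)^2 - m) = 2*m*lN + m * Real.log (1 - (m:ℝ)/(N:ℝ)^2) := by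
        rw [hlogsub]; ring
      have h4 : (m:ℝ) * Real.log (1 - (m:ℝ)/(N:ℝ)^2) ≥ -2*t^2 := by
        have h5 : (m:ℝ) * (-2 * ((m:ℝ)/(N:ℝ)^2)) ≤ (m:ℝ) * Real.log (1 - (m:ℝ)/(N:ℝ)^2) :=
          mul_le_mul_of_nonneg_left h1ylog (by positivity)
        have hkey : (m:ℝ) * (-2 * ((m:ℝ)/(N:ℝ)^2)) = -(2*(m:ℝ)^2/(N:ℝ)^2) := by ring
        have h6 : 2*(m:ℝ)^2/(N:ℝ)^2 ≤ 2*t^2 := by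
          rw [div_le_iff₀ (by positivity : (0:ℝ) < (N:ℝ)^2)]
          have hmm : (m:ℝ)*(m:ℝ) ≤ (t*N)*(t*N) := mul_le_mul hmle hmle hm0R.le htN0
          have e1 : (m:ℝ)^2 = (m:ℝ)*(m:ℝ) := sq _
          have e2 : 2*t^2*(N:ℝ)^2 = 2*((t*N)*(t*N)) := by ring
          linarith
        linarith [h5, h6, hkey.le, hkey.ge]
      linarith
    rw [abs_le]
    constructor
    · linarith
    · linarith [sq_nonneg t]
    -- bound B
  have hB : |B| ≤ lN + |Real.log t| + c₀ := by
    have h1 := hstir m hm1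
    have hlogm : Real.log (m:ℝ) ≤ |Real.log t| + lN := by
      calc Real.log (m:ℝ) ≤ Real.log (t*N) := Real.log_le_log hm0R hmle
        _ = Real.log t + lN := by rw [Real.log_mul ht.ne' hNne, hlNdef]
        _ ≤ |Real.log t| + lN := by linarith [le_abs_self (Real.log t)]
    rw [hBdef, hlFdef]
    calc |Real.log (m.factorial:ℝ) - ((m:ℝ)*Real.log m - m)| ≤ Real.log m + c₀ := h1
      _ ≤ lN + |Real.log t| + c₀ := by linarith
  -- bound G
  have hG : |G| ≤ t*s + 2*s^2 := by
    have he : |Real.log (1 - s/N) + s/N| ≤ 2*(s/N)^2 := log_one_sub_bound hx0.le hxle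
    have hGid : G = ((N:ℝ)^2 - (m:ℝ)) * (Real.log (1 - s/N) + s/N) + (m:ℝ) * (s/N) := by
      rw [hGdef]
      field_simp
      ring
    have h1 : |((N:ℝ)^2 - m) * (Real.log (1 - s/N) + s/N)| ≤ 2*s^2 := by
      rw [abs_mul, abs_of_nonneg (by linarith : (0:ℝ) ≤ (N:ℝ)^2 - m)]
      have h2 : ((N:ℝ)^2 - m) * |Real.log (1 - s/N) + s/N| ≤ (N:ℝ)^2 * (2*(s/N)^2) :=
        mul_le_mul (by linarith) he (abs_nonneg _) (by positivity)
      have h3 : (N:ℝ)^2 * (2*(s/N)^2) = 2*s^2 := by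
        field_simp
      linarith
    have h2 : |(m:ℝ) * (s/N)| ≤ t*s := by
      rw [abs_of_nonneg (by positivity)]
      have h4 : (m:ℝ) * (s/N) ≤ (t*N)*(s/N) := mul_le_mul_of_nonneg_right hmle hx0.le
      have h5 : (t*N)*(s/N) = t*s := by field_simp
      linarith
    calc |G| = |((N:ℝ)^2 - m) * (Real.log (1 - s/N) + s/N) + (m:ℝ) * (s/N)| := by rw [hGid]
      _ ≤ |((N:ℝ)^2 - m) * (Real.log (1 - s/N) + s/N)| + |(m:ℝ) * (s/N)| := abs_add_le _ _
      _ ≤ t*s + 2*s^2 := by linarith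
  -- bound R
  have hR : |R| ≤ 3 + |Real.log t| + |Real.log s| := by
    set y := (t*(N:ℝ) - m)/(t*N) with hydef
    have hy0 : 0 ≤ y := div_nonneg (by linarith) (by positivity)
    have hyle : y ≤ 1/(t*N) := by
      rw [hydef, div_le_div_iff₀ (by positivity) (by positivity)]
      have : (t*(N:ℝ) - m) * (t*N) ≤ 1 * (t*N) :=
        mul_le_mul_of_nonneg_right (by linarith) (by positivity)
      linarith
    have hy2 : y ≤ 1/2 := by
      refine hyle.trans ?_
      rw [div_le_div_iff₀ (by positivity) (by norm_num)]
      linarith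
    have h1y : 1 - y = (m:ℝ)/(t*N) := by
      rw [hydef]; field_simp; ring
    have hl := log_one_sub_bound hy0 hy2
    have hsq : 2*y^2 ≤ y := by
      have h := mul_le_mul_of_nonneg_left hy2 hy0
      have h2 : y^2 = y * y := sq y
      linarith
    have habs : |Real.log (1-y)| ≤ 2*y := by
      have h := abs_le.1 hl
      rw [abs_le]; constructor <;> [linarith [h.1]; linarith [h.2]]
    have hlogm : Real.log (m:ℝ) = Real.log (1-y) + (Real.log t + lN) := by
      have h2 : Real.log (1-y) = Real.log (m:ℝ) - Real.log (t*N) := by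
        rw [h1y, Real.log_div hm0R.ne' (by positivity)]
      rw [h2, Real.log_mul ht.ne' hNne, hlNdef]; ring
    have hRid : R = (m:ℝ)*Real.log (1-y) + ((m:ℝ) - t*N)*(Real.log t - 1 - Real.log s) := by
      rw [hRdef, hlogm]; ring
    have hb1 : |(m:ℝ)*Real.log (1-y)| ≤ 2 := by
      rw [abs_mul, abs_of_nonneg hm0R.le]
      have h2 : (m:ℝ)*|Real.log (1-y)| ≤ (m:ℝ)*(2*y) := mul_le_mul_of_nonneg_left habs hm0R.le
      have h3 : (m:ℝ)*y ≤ (t*N)*(1/(t*N)) := mul_le_mul hmle hyle hy0 htN0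
      have h4 : (t*N)*(1/(t*N)) = 1 := by field_simp
      linarith
    have hb2 : |((m:ℝ) - t*N)*(Real.log t - 1 - Real.log s)| ≤ 1 + |Real.log t| + |Real.log s| := by
      rw [abs_mul]
      have h5 : |(m:ℝ) - t*N| ≤ 1 := by
        rw [abs_le]; constructor <;> linarith
      have h6 : |Real.log t - 1 - Real.log s| ≤ |Real.log t| + 1 + |Real.log s| := by
        have h := abs_add_three (Real.log t) (-1 : ℝ) (-(Real.log s))
        simp only [abs_neg, abs_one] at h
        calc |Real.log t - 1 - Real.log s| = |Real.log t + -1 + -Real.log s| := by ring_nf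
          _ ≤ |Real.log t| + 1 + |Real.log s| := h
      calc |(m:ℝ) - t*N| * |Real.log t - 1 - Real.log s|
          ≤ 1 * (|Real.log t| + 1 + |Real.log s|) :=
            mul_le_mul h5 h6 (abs_nonneg _) (by norm_num)
        _ = 1 + |Real.log t| + |Real.log s| := by ring
    calc |R| = |(m:ℝ)*Real.log (1-y) + ((m:ℝ) - t*N)*(Real.log t - 1 - Real.log s)| := by
          rw [hRid]
      _ ≤ |(m:ℝ)*Real.log (1-y)| + |((m:ℝ) - t*N)*(Real.log t - 1 - Real.log s)| := abs_add_le _ _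
      _ ≤ 3 + |Real.log t| + |Real.log s| := by linarith
  -- assembly
  have hlN1 : 1 ≤ lN := by
    rw [hlNdef, Real.le_log_iff_exp_le hN0]
    calc Real.exp 1 ≤ 2.7182818286 := Real.exp_one_lt_d9.le
      _ ≤ 3 := by norm_num
      _ ≤ (N:ℝ) := h3
  have tri : |(-A) + B - G + R| ≤ |A| + |B| + |G| + |R| := by
    have t1 : |(-A) + B - G + R| ≤ |(-A) + B - G| + |R| := abs_add_le _ _
    have t2 : |(-A) + B - G| ≤ |(-A) + B| + |G| := abs_sub _ _
    have t3 : |(-A) + B| ≤ |A| + |B| := by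
      have := abs_add_le (-A) B
      rwa [abs_neg] at this
    linarith
  calc |(-Real.log (((N^2).choose m : ℝ) * (s/N)^m * (1 - s/N)^(N^2 - m)))
      - (s - t + t * Real.log (t / s)) * N|
      = |(-A) + B - G + R| := by rw [hE]
    _ ≤ |A| + |B| + |G| + |R| := tri
    _ ≤ 2*t^2 + (lN + |Real.log t| + c₀) + (t*s + 2*s^2) + (3 + |Real.log t| + |Real.log s|) := by
        linarith
    _ = K + lN := by rw [hK]; ring
    _ ≤ (K+1)*lN := by
        have := mul_le_mul_of_nonneg_left hlN1 hK0
        linarith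
end

section
/- Let N be a positive integer, and let s > t > 0. Then P{Bin(N², s/N) ≤ tN} = exp(-(s - t + t·ln(t/s))·N + O(ln N)) as N → ∞. -/
open Real

lemma stirling_lb (m : ℕ) (hm : 1 ≤ m) : (1:ℝ) ≤ Stirling.stirlingSeq m := by
  obtain ⟨k, rfl⟩ := Nat.exists_eq_add_of_le hm
  have hst : Real.sqrt π ≤ Stirling.stirlingSeq (1 + k) := by
    have hA := Stirling.stirlingSeq'_antitone
    have hT : Filter.Tendsto (Stirling.stirlingSeq ∘ Nat.succ) Filter.atTop
        (nhds (Real.sqrt π)) :=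
      Stirling.tendsto_stirlingSeq_sqrt_pi.comp (Filter.tendsto_add_atTop_nat 1)
    have := hA.le_of_tendsto hT k
    simpa [Nat.succ_eq_add_one, Nat.add_comm] using this
  refine le_trans ?_ hst
  rw [show (1:ℝ) = Real.sqrt 1 by simp]
  exact Real.sqrt_le_sqrt (by linarith [Real.pi_gt_three])

lemma stirling_ub (m : ℕ) (hm : 1 ≤ m) :
    Stirling.stirlingSeq m ≤ Real.exp 1 / Real.sqrt 2 := by
  obtain ⟨k, rfl⟩ := Nat.exists_eq_add_of_le hm
  have hA := Stirling.stirlingSeq'_antitone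
  have := hA (Nat.zero_le k)
  simpa [Nat.succ_eq_add_one, Nat.add_comm] using this

lemma log_factorial_ge (m : ℕ) (hm : 1 ≤ m) :
    (m : ℝ) * Real.log m - m ≤ Real.log (Nat.factorial m) := by
  have hm' : (0:ℝ) < (m:ℝ) := by exact_mod_cast hm
  have hden : (0:ℝ) < Real.sqrt (2 * m) * ((m : ℝ) / Real.exp 1) ^ m := by positivity
  have h1 := stirling_lb m hm
  rw [Stirling.stirlingSeq, le_div_iff₀ hden, one_mul] at h1
  have h2 : ((m:ℝ) / Real.exp 1) ^ m ≤ (Nat.factorial m : ℝ) := by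
    refine le_trans ?_ h1
    have hs : (1:ℝ) ≤ Real.sqrt (2 * m) := by
      rw [show (1:ℝ) = Real.sqrt 1 by simp]
      refine Real.sqrt_le_sqrt ?_
      have : (1:ℝ) ≤ (m:ℝ) := by exact_mod_cast hm
      linarith
    nlinarith [pow_pos (div_pos hm' (Real.exp_pos 1)) m]
  have h3 := Real.log_le_log (by positivity) h2
  rw [Real.log_pow, Real.log_div (ne_of_gt hm') (ne_of_gt (Real.exp_pos 1)),
    Real.log_exp] at h3
  calc (m : ℝ) * Real.log m - m = m * (Real.log m - 1) := by ring
  _ ≤ _ := h3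

lemma log_factorial_le (m : ℕ) (hm : 1 ≤ m) :
    Real.log (Nat.factorial m) ≤ 1 + Real.log m + ((m : ℝ) * Real.log m - m) := by
  have hm' : (0:ℝ) < (m:ℝ) := by exact_mod_cast hm
  have hden : (0:ℝ) < Real.sqrt (2 * m) * ((m : ℝ) / Real.exp 1) ^ m := by positivity
  have h1 := stirling_ub m hm
  rw [Stirling.stirlingSeq, div_le_div_iff₀ hden (Real.sqrt_pos.2 (by norm_num))] at h1
  rw [Real.sqrt_mul (by norm_num : (0:ℝ) ≤ 2)] at h1
  have hs2 : (0:ℝ) < Real.sqrt 2 := Real.sqrt_pos.2 (by norm_num)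
  have hm1 : (1:ℝ) ≤ (m:ℝ) := by exact_mod_cast hm
  have hsm : Real.sqrt (m:ℝ) ≤ (m:ℝ) := by
    have h := Real.sqrt_le_sqrt (show (m:ℝ) ≤ (m:ℝ)^2 by nlinarith)
    rwa [Real.sqrt_sq hm'.le] at h
  set p := ((m:ℝ) / Real.exp 1) ^ m with hpdef
  have hp : (0:ℝ) < p := pow_pos (div_pos hm' (Real.exp_pos 1)) m
  have h4 : Real.exp 1 * (Real.sqrt 2 * Real.sqrt m * p) ≤ (Real.exp 1 * m * p) * Real.sqrt 2 := by
    have hmp : Real.sqrt (m:ℝ) * p ≤ (m:ℝ) * p := mul_le_mul_of_nonneg_right hsm hp.le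
    have h := mul_le_mul_of_nonneg_left hmp (mul_nonneg (Real.exp_pos 1).le hs2.le)
    ring_nf at h ⊢
    linarith
  have h5 : (Nat.factorial m : ℝ) * Real.sqrt 2 ≤ (Real.exp 1 * m * p) * Real.sqrt 2 :=
    le_trans h1 h4
  have h2 : (Nat.factorial m : ℝ) ≤ Real.exp 1 * m * p := le_of_mul_le_mul_right h5 hs2
  have h3 := Real.log_le_log (by positivity) h2
  rw [hpdef, Real.log_mul (by positivity) (by positivity), Real.log_mul (by positivity) (ne_of_gt hm'),
    Real.log_pow, Real.log_div (ne_of_gt hm') (ne_of_gt (Real.exp_pos 1)),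
    Real.log_exp] at h3
  calc Real.log (Nat.factorial m) ≤ 1 + Real.log m + m * (Real.log m - 1) := h3
  _ = 1 + Real.log m + ((m : ℝ) * Real.log m - m) := by ring

lemma log_choose_le (n M : ℕ) (hM : 1 ≤ M) (hMn : M ≤ n) :
    Real.log (n.choose M) ≤ (M:ℝ) * Real.log n - ((M:ℝ) * Real.log M - M) := by
  have hd : (Nat.factorial M) * n.choose M ≤ n ^ M := by
    rw [← Nat.descFactorial_eq_factorial_mul_choose]
    exact Nat.descFactorial_le_pow n M
  have hc : 0 < n.choose M := Nat.choose_pos hMn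
  have h1 : Real.log ((Nat.factorial M : ℝ) * (n.choose M : ℝ)) ≤ Real.log ((n:ℝ) ^ M) := by
    apply Real.log_le_log (by positivity)
    exact_mod_cast hd
  rw [Real.log_mul (by positivity) (by exact_mod_cast hc.ne'), Real.log_pow] at h1
  have h2 := log_factorial_ge M hM
  linarith

lemma log_choose_ge (n M : ℕ) (hM : 1 ≤ M) (hMn : M < n) :
    (M:ℝ) * Real.log ((n:ℝ) - M) - (1 + Real.log M + ((M:ℝ) * Real.log M - M))
      ≤ Real.log (n.choose M) := by
  have hd : (n - M) ^ M ≤ (Nat.factorial M) * n.choose M := by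
    rw [← Nat.descFactorial_eq_factorial_mul_choose]
    calc (n - M) ^ M ≤ (n + 1 - M) ^ M := Nat.pow_le_pow_left (by omega) M
    _ ≤ n.descFactorial M := Nat.pow_sub_le_descFactorial n M
  have hc : 0 < n.choose M := Nat.choose_pos hMn.le
  have hnM : 1 ≤ n - M := by omega
  have h1 : Real.log (((n - M : ℕ) : ℝ) ^ M) ≤
      Real.log ((Nat.factorial M : ℝ) * (n.choose M : ℝ)) := by
    apply Real.log_le_log (by positivity)
    exact_mod_cast hd
  rw [Real.log_mul (by positivity) (by exact_mod_cast hc.ne'), Real.log_pow,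
    Nat.cast_sub hMn.le] at h1
  have h2 := log_factorial_le M hM
  linarith

lemma binom_step (n m : ℕ) (x : ℝ) (hx0 : 0 ≤ x) (hx1 : x ≤ 1) (hmn : m + 1 ≤ n)
    (hkey : (1 - x) * ((m:ℝ) + 1) ≤ ((n:ℝ) - m) * x) :
    (n.choose m : ℝ) * x^m * (1-x)^(n-m) ≤ (n.choose (m+1) : ℝ) * x^(m+1) * (1-x)^(n-(m+1)) := by
  have hid : ((n.choose (m+1) : ℝ)) * ((m:ℝ)+1) = (n.choose m : ℝ) * ((n:ℝ) - (m:ℝ)) := by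
    have h := Nat.choose_succ_right_eq n m
    have h' : ((n.choose (m+1) * (m+1) : ℕ) : ℝ) = ((n.choose m * (n - m) : ℕ) : ℝ) := by
      exact_mod_cast congrArg (Nat.cast : ℕ → ℝ) h
    push_cast [Nat.cast_sub (show m ≤ n by omega)] at h'
    linarith [h']
  have hpow : (1-x)^(n-m) = (1-x)^(n-(m+1)) * (1-x) := by
    rw [← pow_succ]
    congr 1
    omega
  have hm1 : (0:ℝ) < (m:ℝ) + 1 := by positivity
  have hnonneg : (0:ℝ) ≤ (n.choose m : ℝ) * x^m * (1-x)^(n-(m+1)) :=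
    mul_nonneg (mul_nonneg (by positivity) (pow_nonneg hx0 m)) (pow_nonneg (by linarith) _)
  apply le_of_mul_le_mul_right ?_ hm1
  calc (n.choose m : ℝ) * x^m * (1-x)^(n-m) * ((m:ℝ)+1)
      = ((n.choose m : ℝ) * x^m * (1-x)^(n-(m+1))) * ((1-x) * ((m:ℝ)+1)) := by rw [hpow]; ring
    _ ≤ ((n.choose m : ℝ) * x^m * (1-x)^(n-(m+1))) * (((n:ℝ) - m) * x) :=
        mul_le_mul_of_nonneg_left hkey hnonneg
    _ = ((n.choose m : ℝ) * ((n:ℝ) - m)) * (x^m * x) * (1-x)^(n-(m+1)) := by ring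
    _ = ((n.choose (m+1) : ℝ) * ((m:ℝ)+1)) * (x^m * x) * (1-x)^(n-(m+1)) := by rw [hid]
    _ = (n.choose (m+1) : ℝ) * x^(m+1) * (1-x)^(n-(m+1)) * ((m:ℝ)+1) := by rw [pow_succ]; ring

lemma chain_le {b : ℕ → ℝ} : ∀ M : ℕ, (∀ m, m < M → b m ≤ b (m+1)) → ∀ m, m ≤ M → b m ≤ b M := by
  intro M
  induction M with
  | zero => intro _ m hm; exact le_of_eq (by rw [Nat.le_zero.mp hm])
  | succ K ih =>
    intro h m hm
    rcases eq_or_lt_of_le hm with h1 | h1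
    · exact le_of_eq (by rw [h1])
    · exact (ih (fun k hk => h k (by omega)) m (by omega)).trans (h K (by omega))

lemma log_one_sub_ge (y : ℝ) (h0 : 0 ≤ y) (h2 : y ≤ 1/2) : -y - 2*y^2 ≤ Real.log (1-y) := by
  have h1 : (0:ℝ) < 1 - y := by linarith
  have h := Real.one_sub_inv_le_log_of_pos h1
  have hy : (1-y)⁻¹ * (1-y) = 1 := inv_mul_cancel₀ h1.ne'
  nlinarith [h, hy, mul_nonneg (mul_nonneg h0 h0) (show (0:ℝ) ≤ 1 - 2*y by linarith)]

set_option maxHeartbeats 1000000 in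
/-- Binomial tail estimate: for `s > t > 0`,
`P{Bin(N², s/N) ≤ tN} = exp(-(s - t + t·ln(t/s))·N + O(ln N))` as `N → ∞`
(over those `N` with `s/N ≤ 1`). -/
theorem binomial_tail_estimate (s t : ℝ) (ht : 0 < t) (hts : t < s) :
    ∃ C : ℝ, 0 < C ∧ ∀ᶠ N : ℕ in Filter.atTop,
      s / N ≤ 1 →
      |(-Real.log (∑ m ∈ Finset.range (⌊t * (N : ℝ)⌋₊ + 1),
            ((N ^ 2).choose m : ℝ) * (s / N) ^ m * (1 - s / N) ^ (N ^ 2 - m)))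
        - (s - t + t * Real.log (t / s)) * N| ≤ C * Real.log N := by
  have hs0 : 0 < s := ht.trans hts
  have hlogst : 0 < Real.log (s/t) := Real.log_pos ((one_lt_div ht).2 hts)
  have hlogt1 : 0 < Real.log (t+1) := Real.log_pos (by linarith)
  set clow : ℝ := 2 + Real.log (s/t) + |Real.log t| + 2*t^2 + 2*s^2 with hclow
  have hclow0 : 0 ≤ clow := by
    have := abs_nonneg (Real.log t); positivity
  refine ⟨clow + t*s + Real.log (t+1) + 1, by positivity, ?_⟩
  rw [Filter.eventually_atTop]
  refine ⟨⌈(3:ℝ) + 2*s + 2*t + 2/t + (s*t)/(s-t)⌉₊, ?_⟩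
  intro N hNN hsN
  have hNc : (3:ℝ) + 2*s + 2*t + 2/t + (s*t)/(s-t) ≤ (N:ℝ) := by
    calc _ ≤ (⌈(3:ℝ) + 2*s + 2*t + 2/t + (s*t)/(s-t)⌉₊ : ℝ) := Nat.le_ceil _
    _ ≤ (N:ℝ) := by exact_mod_cast hNN
  have hterm1 : (0:ℝ) < 2/t := by positivity
  have hterm2 : (0:ℝ) < (s*t)/(s-t) := by
    have : (0:ℝ) < s - t := by linarith
    positivity
  have hN3 : (3:ℝ) ≤ N := by linarith
  have hN2s : 2*s ≤ (N:ℝ) := by linarith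
  have hN2t : 2*t ≤ (N:ℝ) := by linarith
  have hN2dt : 2/t ≤ (N:ℝ) := by linarith
  have hNst : (s*t)/(s-t) ≤ (N:ℝ) := by linarith
  have hN0 : (0:ℝ) < N := by linarith
  -- basic objects
  set x : ℝ := s / N with hxdef
  set n : ℕ := N^2 with hndef
  set M : ℕ := ⌊t * (N:ℝ)⌋₊ with hMdef
  have hnn : (n:ℝ) = (N:ℝ)^2 := by rw [hndef]; push_cast; ring
  have hx0 : 0 < x := by rw [hxdef]; positivity
  have hxhalf : x ≤ 1/2 := by
    rw [hxdef, div_le_iff₀ hN0]; linarith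
  have hx1 : (0:ℝ) < 1 - x := by linarith
  have htN2 : (2:ℝ) ≤ t * N := by
    rw [div_le_iff₀ ht] at hN2dt
    linarith only [hN2dt]
  have hM1 : 1 ≤ M := Nat.le_floor (by push_cast; linarith)
  have hM0R : (0:ℝ) < M := by exact_mod_cast hM1
  have hMle : (M:ℝ) ≤ t*N := Nat.floor_le (by positivity)
  have hMgt : t*N < (M:ℝ) + 1 := Nat.lt_floor_add_one _
  have hsN : s ≤ (N:ℝ) := by linarith
  have hMltnR : (M:ℝ) < (n:ℝ) := by
    rw [hnn]; nlinarith
  have hMltn : M < n := by exact_mod_cast hMltnR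
  have hnM0 : (0:ℝ) < (n:ℝ) - M := by linarith
  set b : ℕ → ℝ := fun m => ((n.choose m : ℝ)) * x^m * (1-x)^(n-m) with hbdef
  set P : ℝ := ∑ m ∈ Finset.range (M + 1), b m with hPdef
  -- positivity of terms
  have hb_pos : ∀ m, m ≤ M → 0 < b m := by
    intro m hm
    have hc : 0 < n.choose m := Nat.choose_pos (by omega)
    have : (0:ℝ) < (n.choose m : ℝ) := by exact_mod_cast hc
    rw [hbdef]
    have := pow_pos hx0 m
    have := pow_pos hx1 (n - m)
    positivity
  -- monotone steps up to M
  have hstep : ∀ m, m < M → b m ≤ b (m+1) := by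
    intro m hm
    simp only [hbdef]
    apply binom_step n m x hx0.le (by linarith) (by omega)
    have hm1M : (m:ℝ) + 1 ≤ M := by exact_mod_cast Nat.succ_le_of_lt hm
    have h1 : (1 - x) * ((m:ℝ) + 1) ≤ t * N := by
      nlinarith
    have h2 : ((n:ℝ) - M) * x ≤ ((n:ℝ) - m) * x := by
      have : (m:ℝ) ≤ M := by linarith
      nlinarith
    have h3 : ((N:ℝ)^2 - t*N) * x = s*N - t*s := by
      rw [hxdef]; field_simp
    have h4 : ((N:ℝ)^2 - t*N) * x ≤ ((n:ℝ) - M) * x := by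
      have : (N:ℝ)^2 - t*N ≤ (n:ℝ) - M := by rw [hnn]; linarith
      nlinarith
    have h5 : t*N ≤ s*N - t*s := by
      rw [div_le_iff₀ (show (0:ℝ) < s - t by linarith)] at hNst
      nlinarith
    linarith
  have hchain : ∀ m, m ≤ M → b m ≤ b M := chain_le M hstep
  have hbM : 0 < b M := hb_pos M le_rfl
  have hPlow : b M ≤ P := by
    rw [hPdef]
    exact Finset.single_le_sum
      (fun i hi => (hb_pos i (Finset.mem_range_succ_iff.mp hi)).le)
      (Finset.self_mem_range_succ M)
  have hPup : P ≤ ((M:ℝ) + 1) * b M := by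
    rw [hPdef]
    have := Finset.sum_le_card_nsmul (Finset.range (M+1)) b (b M)
      (fun i hi => hchain i (Finset.mem_range_succ_iff.mp hi))
    simpa [Finset.card_range, nsmul_eq_mul, add_comm] using this
  have hP0 : 0 < P := lt_of_lt_of_le hbM hPlow
  -- log of b M
  have hcM : (0:ℝ) < (n.choose M : ℝ) := by
    exact_mod_cast Nat.choose_pos hMltn.le
  have hn0R : (0:ℝ) < (n:ℝ) := lt_trans hM0R hMltnR
  have hlogbM : Real.log (b M) = Real.log (n.choose M) + (M:ℝ) * Real.log x
      + ((n:ℝ) - M) * Real.log (1-x) := by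
    simp only [hbdef]
    rw [Real.log_mul (mul_ne_zero hcM.ne' (pow_ne_zero _ hx0.ne')) (pow_ne_zero _ hx1.ne'),
      Real.log_mul hcM.ne' (pow_ne_zero _ hx0.ne'), Real.log_pow, Real.log_pow,
      Nat.cast_sub hMltn.le]
  -- key multiplicative identities
  have hnx : (n:ℝ) * x = s * N := by rw [hnn, hxdef]; field_simp
  have htNx : t * N * x = t * s := by rw [hxdef]; field_simp
  have hlogsum : Real.log (n:ℝ) + Real.log x = Real.log (s*N) := by
    rw [← Real.log_mul hn0R.ne' hx0.ne', hnx]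
  have hels : Real.log (s*N) = Real.log (s/t) + Real.log (t*N) := by
    have he : s*(N:ℝ) = (s/t)*(t*N) := by field_simp
    rw [he, Real.log_mul (by positivity) (by positivity)]
  -- UPPER bound: log bM ≤ t N log(s/t) + t N - s N + t s
  have hup : Real.log (b M) ≤ t*N*Real.log (s/t) + t*N - s*N + t*s := by
    have u1 := log_choose_le n M hM1 hMltn.le
    -- u3
    have hlx : Real.log (1-x) ≤ -x := by
      have h := Real.log_le_sub_one_of_pos hx1; linarith only [h]
    have u3a : ((n:ℝ) - M) * Real.log (1-x) ≤ ((n:ℝ) - M) * (-x) :=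
      mul_le_mul_of_nonneg_left hlx hnM0.le
    have hMx : (M:ℝ) * x ≤ t*N*x := mul_le_mul_of_nonneg_right hMle hx0.le
    have u3 : ((n:ℝ) - M) * Real.log (1-x) ≤ -(s*N) + t*s := by
      have hexp : ((n:ℝ) - M) * (-x) = -((n:ℝ)*x) + (M:ℝ)*x := by ring
      rw [hexp] at u3a
      linarith only [u3a, hMx, hnx, htNx]
    -- u4 : M * (log(s N) - log M) + M ≤ t N log(s/t) + t N
    have p1 : (M:ℝ) * Real.log (s/t) ≤ t*N*Real.log (s/t) :=
      mul_le_mul_of_nonneg_right hMle hlogst.le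
    have p2 : (M:ℝ) * (Real.log (t*N) - Real.log M) ≤ t*N - M := by
      have hq : (0:ℝ) < t*N/(M:ℝ) := by positivity
      have h := Real.log_le_sub_one_of_pos hq
      rw [Real.log_div (by positivity) hM0R.ne'] at h
      have h2 := mul_le_mul_of_nonneg_left h hM0R.le
      have heq : (M:ℝ) * (t*N/(M:ℝ) - 1) = t*N - M := by field_simp
      linarith only [h2, heq]
    -- combine
    have hMlog : (M:ℝ) * Real.log (n:ℝ) + (M:ℝ) * Real.log x = (M:ℝ) * Real.log (s*N) := by
      rw [← mul_add, hlogsum]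
    have hMels : (M:ℝ) * Real.log (s*N) =
        (M:ℝ) * Real.log (s/t) + (M:ℝ) * Real.log (t*N) := by
      rw [hels]; ring
    rw [hlogbM]
    linarith only [u1, u3, p1, p2, hMlog, hMels]
  -- LOWER bound
  have hlow : t*N*Real.log (s/t) + t*N - s*N - (clow + Real.log N) ≤ Real.log (b M) := by
    have l1 := log_choose_ge n M hM1 hMltn
    -- l2
    have llog : -x - 2*x^2 ≤ Real.log (1-x) := log_one_sub_ge x hx0.le hxhalf
    have hlx0 : Real.log (1-x) ≤ 0 := Real.log_nonpos (by linarith) (by linarith)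
    have q1 : (n:ℝ) * Real.log (1-x) ≤ ((n:ℝ) - M) * Real.log (1-x) := by
      have h := mul_nonpos_of_nonneg_of_nonpos hM0R.le hlx0
      linarith only [h]
    have q2 : (n:ℝ) * (-x - 2*x^2) ≤ (n:ℝ) * Real.log (1-x) :=
      mul_le_mul_of_nonneg_left llog (by positivity)
    have q3 : (n:ℝ) * (-x - 2*x^2) = -(s*N) - 2*s^2 := by
      rw [hnn, hxdef]; field_simp
    have l2 : -(s*N) - 2*s^2 ≤ ((n:ℝ) - M) * Real.log (1-x) := by
      rw [q3] at q2; linarith only [q1, q2]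
    -- l3
    have htN2' : t/(N:ℝ) ≤ 1/2 := by rw [div_le_iff₀ hN0]; linarith
    have h1tN : (0:ℝ) < 1 - t/N := by linarith
    have hsNts : (0:ℝ) < s*N - t*s := by
      have h := mul_pos hs0 (show (0:ℝ) < (N:ℝ) - t by linarith only [hN2t, ht])
      linarith only [h]
    have hl3a : s*N - t*s ≤ ((n:ℝ) - M) * x := by
      have h3 : ((N:ℝ)^2 - t*N) * x = s*N - t*s := by
        rw [hxdef]; field_simp
      have h4 : (N:ℝ)^2 - t*N ≤ (n:ℝ) - M := by rw [hnn]; linarith only [hMle]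
      have h5 := mul_le_mul_of_nonneg_right h4 hx0.le
      linarith only [h3, h5]
    have hl3b : Real.log (s*N - t*s) ≤ Real.log (((n:ℝ) - M) * x) :=
      Real.log_le_log hsNts hl3a
    have hl3c : Real.log (s*N - t*s) = Real.log (s*N) + Real.log (1 - t/N) := by
      rw [← Real.log_mul (by positivity) h1tN.ne']
      congr 1
      field_simp
    have hl3d : -(2*(t/N)) ≤ Real.log (1 - t/N) := by
      have h := log_one_sub_ge (t/N) (by positivity) htN2'
      have hy : (0:ℝ) ≤ (t/N) * (1 - 2*(t/N)) :=
        mul_nonneg (by positivity) (by linarith only [htN2'])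
      linarith only [h, hy]
    have hlmul : Real.log (((n:ℝ)-M)*x) = Real.log ((n:ℝ)-M) + Real.log x :=
      Real.log_mul hnM0.ne' hx0.ne'
    have hstep1 : Real.log (s*N) - 2*(t/N) ≤ Real.log ((n:ℝ)-M) + Real.log x := by
      rw [hl3c] at hl3b; rw [hlmul] at hl3b; linarith only [hl3b, hl3d]
    have l3 : (M:ℝ) * Real.log (s*N) - 2*t^2 ≤
        (M:ℝ) * Real.log ((n:ℝ)-M) + (M:ℝ) * Real.log x := by
      have h := mul_le_mul_of_nonneg_left hstep1 hM0R.le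
      have e1 : (M:ℝ)*(Real.log (s*N) - 2*(t/N)) =
          (M:ℝ)*Real.log (s*N) - (M:ℝ)*(2*(t/N)) := by ring
      have e2 : (M:ℝ)*(Real.log ((n:ℝ)-M) + Real.log x) =
          (M:ℝ)*Real.log ((n:ℝ)-M) + (M:ℝ)*Real.log x := by ring
      have hMtN : (M:ℝ) * (2*(t/N)) ≤ 2*t^2 := by
        have h1 : (M:ℝ)*(2*(t/N)) ≤ (t*N)*(2*(t/N)) :=
          mul_le_mul_of_nonneg_right hMle (by positivity)
        have h2 : (t*N)*(2*(t/N)) = 2*t^2 := by field_simp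
        linarith only [h1, h2]
      rw [e1, e2] at h
      linarith only [h, hMtN]
    -- l4
    have hLM : Real.log (M:ℝ) ≤ Real.log (t*N) := Real.log_le_log hM0R hMle
    have hlsM : Real.log (s/t) ≤ Real.log (s*N) - Real.log (M:ℝ) := by
      rw [hels]; linarith only [hLM]
    have l4a : (M:ℝ) * Real.log (s/t) ≤ (M:ℝ)*Real.log (s*N) - (M:ℝ)*Real.log (M:ℝ) := by
      have h := mul_le_mul_of_nonneg_left hlsM hM0R.le
      have e : (M:ℝ) * (Real.log (s*N) - Real.log (M:ℝ)) =
          (M:ℝ)*Real.log (s*N) - (M:ℝ)*Real.log (M:ℝ) := by ring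
      linarith only [h, e]
    have l4b : (t*N - 1) * Real.log (s/t) ≤ (M:ℝ) * Real.log (s/t) :=
      mul_le_mul_of_nonneg_right (by linarith) hlogst.le
    -- l5
    have l5 : Real.log (M:ℝ) ≤ |Real.log t| + Real.log N := by
      have h1 : Real.log (t*N) = Real.log t + Real.log N := Real.log_mul ht.ne' hN0.ne'
      have h2 := le_abs_self (Real.log t)
      linarith only [hLM, h1, h2]
    -- combine
    rw [hlogbM]
    have e3 : (t*N - 1) * Real.log (s/t) = t*N*Real.log (s/t) - Real.log (s/t) := by ring
    rw [hclow]
    linarith only [l1, l2, l3, l4a, l4b, l5, hMgt, hlogst]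
  -- conclusion
  have hLN1 : (1:ℝ) ≤ Real.log N := by
    have he : Real.exp 1 ≤ 3 := by
      have := Real.exp_one_lt_d9; linarith
    have h1 : Real.log (Real.exp 1) ≤ Real.log 3 := Real.log_le_log (Real.exp_pos 1) he
    have h2 : Real.log 3 ≤ Real.log N := Real.log_le_log (by norm_num) hN3
    rw [Real.log_exp] at h1
    linarith
  have hlogts : Real.log (t/s) = -Real.log (s/t) := by
    rw [← Real.log_inv, inv_div]
  have hAe : (s - t + t*Real.log (t/s))*N = s*N - t*N - t*N*Real.log (s/t) := by
    rw [hlogts]; ring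
  have hB1 : -Real.log P - (s - t + t*Real.log (t/s))*N ≤ clow + Real.log N := by
    have hlogP : Real.log (b M) ≤ Real.log P := Real.log_le_log hbM hPlow
    rw [hAe]
    linarith only [hlow, hlogP]
  have hB2 : (s - t + t*Real.log (t/s))*N + Real.log P ≤ t*s + Real.log (t+1) + Real.log N := by
    have hlogP2 : Real.log P ≤ Real.log (((M:ℝ)+1) * b M) := Real.log_le_log hP0 hPup
    rw [Real.log_mul (by positivity) hbM.ne'] at hlogP2
    have hM1b : Real.log ((M:ℝ)+1) ≤ Real.log (t+1) + Real.log N := by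
      have hle : (M:ℝ)+1 ≤ (t+1)*N := by
        have : (t+1)*(N:ℝ) = t*N + N := by ring
        linarith only [hMle, hN3, this]
      have h := Real.log_le_log (by positivity) hle
      rw [Real.log_mul (by positivity) hN0.ne'] at h
      linarith only [h]
    rw [hAe]
    linarith only [hup, hlogP2, hM1b]
  have hc0 : (0:ℝ) ≤ clow + t*s + Real.log (t+1) := by
    have h := mul_pos ht hs0
    linarith only [hclow0, hlogt1, h]
  have hCLN : clow + t*s + Real.log (t+1) + Real.log N ≤
      (clow + t*s + Real.log (t+1) + 1) * Real.log N := by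
    have h := mul_le_mul_of_nonneg_left hLN1 hc0
    rw [mul_one] at h
    linarith only [h, hLN1]
  clear_value clow P
  rw [abs_le]
  constructor
  · linarith only [hB2, hCLN, hclow0]
  · linarith only [hB1, hCLN, hlogt1, hs0, ht, hclow0, hLN1,
      mul_pos ht hs0]
end

section
/- For any m, b, w, e ≥ 0, the number of walks of length m in the complete graph K_n that have exactly m+1−w distinct vertices, exactly m−e distinct edges, no vertex repeated more than b times, and no edge repeated twice in a row, is at most 2·n^{m−w+1}·(m+1)^{4(w−e)}·2^{2b(w−e)}. -/
open Finset

namespace WalkBound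

/-- rank of `a` in `s`. -/
def rk {α : Type*} [LinearOrder α] (s : Finset α) (a : α) : ℕ := (s.filter (· < a)).card

lemma rk_lt_card {α : Type*} [LinearOrder α] {s : Finset α} {a : α} (ha : a ∈ s) :
    rk s a < s.card := by
  apply Finset.card_lt_card
  constructor
  · exact Finset.filter_subset _ _
  · intro hsub
    have := hsub ha
    simp at this

lemma rk_injOn {α : Type*} [LinearOrder α] {s : Finset α} {a a' : α} (ha : a ∈ s) (ha' : a' ∈ s)
    (h : rk s a = rk s a') : a = a' := by
  rcases lt_trichotomy a a' with hlt | heq | hlt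
  · exfalso
    have hcard : rk s a < rk s a' := by
      apply Finset.card_lt_card
      constructor
      · intro x hx
        simp only [Finset.mem_filter] at hx ⊢
        exact ⟨hx.1, lt_trans hx.2 hlt⟩
      · intro hsub
        have := hsub (by simp only [Finset.mem_filter]; exact ⟨ha, hlt⟩)
        simp at this
    omega
  · exact heq
  · exfalso
    have hcard : rk s a' < rk s a := by
      apply Finset.card_lt_card
      constructor
      · intro x hx
        simp only [Finset.mem_filter] at hx ⊢
        exact ⟨hx.1, lt_trans hx.2 hlt⟩
      · intro hsub
        have := hsub (by simp only [Finset.mem_filter]; exact ⟨ha', hlt⟩)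
        simp at this
    omega

lemma rk_orderEmbOfFin {α : Type*} [LinearOrder α] (s : Finset α) {N : ℕ} (h : s.card = N)
    (j : Fin N) : rk s (s.orderEmbOfFin h j) = (j : ℕ) := by
  have hrange := Finset.range_orderEmbOfFin s h
  have : s.filter (· < s.orderEmbOfFin h j) = (Finset.Iio j).image (s.orderEmbOfFin h) := by
    ext x
    simp only [Finset.mem_filter, Finset.mem_image, Finset.mem_Iio]
    constructor
    · rintro ⟨hxs, hxlt⟩
      have : x ∈ Set.range (s.orderEmbOfFin h) := by rw [hrange]; exact hxs
      obtain ⟨i, rfl⟩ := this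
      exact ⟨i, by rwa [OrderEmbedding.lt_iff_lt] at hxlt, rfl⟩
    · rintro ⟨i, hij, rfl⟩
      exact ⟨Finset.orderEmbOfFin_mem s h i, by rwa [OrderEmbedding.lt_iff_lt]⟩
  rw [rk, this, Finset.card_image_of_injective _ (s.orderEmbOfFin h).injective, Fin.card_Iio]

/-- the element of `s` with given rank is the `orderEmbOfFin` value. -/
lemma orderEmbOfFin_of_rk {α : Type*} [LinearOrder α] {s : Finset α} {N : ℕ} (h : s.card = N)
    {a : α} (ha : a ∈ s) {k : ℕ} (hk : rk s a = k) (hkN : k < N) :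
    s.orderEmbOfFin h ⟨k, hkN⟩ = a := by
  apply rk_injOn (Finset.orderEmbOfFin_mem s h _) ha
  rw [rk_orderEmbOfFin, hk]

/-- number of fresh indices below `k` equals the cardinality of the image. -/
lemma card_fresh_filter {β : Type*} [DecidableEq β] (f : ℕ → β) (k : ℕ) :
    ((Finset.range k).filter (fun i => ∀ j < i, f j ≠ f i)).card
      = ((Finset.range k).image f).card := by
  classical
  have himg : ((Finset.range k).filter (fun i => ∀ j < i, f j ≠ f i)).image f
      = (Finset.range k).image f := by
    apply Finset.Subset.antisymm
    · exact Finset.image_subset_image (Finset.filter_subset _ _)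
    · intro y hy
      simp only [Finset.mem_image, Finset.mem_range] at hy
      obtain ⟨i, hik, rfl⟩ := hy
      have hex : ∃ j, f j = f i := ⟨i, rfl⟩
      set i0 := Nat.find hex with hi0
      have hspec : f i0 = f i := Nat.find_spec hex
      have hle : i0 ≤ i := Nat.find_le rfl
      simp only [Finset.mem_image, Finset.mem_filter, Finset.mem_range]
      refine ⟨i0, ⟨lt_of_le_of_lt hle hik, ?_⟩, hspec⟩
      intro j hj hfj
      have := Nat.find_min hex hj
      rw [hspec] at hfj
      exact this (by rw [hfj, ← hspec])
  have hinj : Set.InjOn f ((Finset.range k).filter (fun i => ∀ j < i, f j ≠ f i)) := by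
    intro i hi j hj hf
    simp only [Finset.coe_filter, Set.mem_setOf_eq, Finset.mem_range] at hi hj
    rcases lt_trichotomy i j with hlt | heq | hlt
    · exact absurd hf (hj.2 i hlt)
    · exact heq
    · exact absurd hf.symm (hi.2 j hlt)
  rw [← himg, Finset.card_image_of_injOn hinj]


open scoped Classical

noncomputable section

variable {n : ℕ} (m : ℕ) (u : ℕ → Fin n)

def ed (i : ℕ) : Sym2 (Fin n) := s(u i, u (i+1))

def freshV (i : ℕ) : Prop := ∀ j < i, u j ≠ u i

def Otyp (i : ℕ) : Prop := i < m ∧ ∃ j < i, ed u j = ed u i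

def Ntyp (i : ℕ) : Prop := i < m ∧ (∀ j < i, ed u j ≠ ed u i) ∧ ¬ freshV u (i+1)

def Ftyp (i : ℕ) : Prop := i < m ∧ freshV u (i+1)

def FS : Finset ℕ := (range (m+1)).filter (freshV u)

def NS : Finset ℕ := (range m).filter (Ntyp m u)

def OS : Finset ℕ := (range m).filter (Otyp m u)

def EG : Finset (Sym2 (Fin n)) := (range m).image (ed u)

def deg (x : Fin n) : ℕ := ((EG m u).filter (fun z => x ∈ z)).card

def curA (i : ℕ) : Finset (Fin n) :=
  univ.filter (fun x => x ≠ u (i-1) ∧ ∃ j < i, ed u j = s(u i, x))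

def wd (i : ℕ) : ℕ := (curA u i).card - 1

def cc (i : ℕ) : ℕ := rk (curA u i) (u (i+1))

def offs (i : ℕ) : ℕ := ∑ j ∈ (range i).filter (Otyp m u), wd u j

def Btot : ℕ := ∑ j ∈ OS m u, cc u j * 2 ^ offs m u j

def runlen (p : ℕ) : ℕ :=
  Nat.findGreatest (fun d => ∀ s, p < s → s ≤ p + d → Otyp m u s) m

def tgt (p : ℕ) : ℕ := Nat.find (⟨p+1, rfl⟩ : ∃ j, u j = u (p+1))

structure Hyp (b w e : ℕ) : Prop where
  step : ∀ i < m, u i ≠ u (i+1)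
  nb : ∀ i, i + 1 < m → ed u i ≠ ed u (i+1)
  hV : ((range (m+1)).image u).card = m + 1 - w
  hE : (EG m u).card = m - e
  hb : ∀ x : Fin n, ((range (m+1)).filter (fun i => u i = x)).card ≤ b

end
section
variable {n m b w e : ℕ} {u : ℕ → Fin n}

lemma otyp_pos {i : ℕ} (h : Otyp m u i) : 1 ≤ i := by
  rcases h.2 with ⟨j, hj, _⟩; omega

lemma type_partition {i : ℕ} (him : i < m) :
    Ftyp m u i ∨ Ntyp m u i ∨ Otyp m u i := by
  by_cases hO : ∃ j < i, ed u j = ed u i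
  · right; right; exact ⟨him, hO⟩
  · push_neg at hO
    by_cases hf : freshV u (i+1)
    · left; exact ⟨him, hf⟩
    · right; left; exact ⟨him, hO, hf⟩

lemma newE_of_fresh {i : ℕ} (hf : freshV u (i+1)) : ∀ j < i, ed u j ≠ ed u i := by
  intro j hj heq
  rw [ed, ed, Sym2.eq_iff] at heq
  rcases heq with ⟨_, h2⟩ | ⟨h1, _⟩
  · exact hf (j+1) (by omega) h2
  · exact hf j (by omega) h1

lemma not_fresh_of_otyp (hy : Hyp m u b w e) {i : ℕ} (hO : Otyp m u i) :
    ¬ freshV u i := by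
  obtain ⟨him, j, hj, heq⟩ := hO
  intro hf
  have heq' := heq
  rw [ed, ed, Sym2.eq_iff] at heq'
  rcases heq' with ⟨h1, _⟩ | ⟨_, h2⟩
  · exact hf j hj h1
  · rcases Nat.lt_or_ge (j+1) i with hlt | hge
    · exact hf (j+1) hlt h2
    · have hji : j + 1 = i := by omega
      have := hy.nb j (by omega)
      rw [hji] at this
      exact this heq

lemma anchor (hy : Hyp m u b w e) : ∀ i, Otyp m u i →
    ∃ p, Ntyp m u p ∧ p < i ∧ ∀ s, p < s → s ≤ i → Otyp m u s := by
  intro i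
  induction i using Nat.strong_induction_on with
  | _ i ih =>
    intro hO
    have hi1 : 1 ≤ i := otyp_pos hO
    have him : i - 1 < m := by have := hO.1; omega
    rcases type_partition him with hF | hN | hOprev
    · exfalso
      have : freshV u i := by
        have := hF.2
        rwa [Nat.sub_add_cancel hi1] at this
      exact not_fresh_of_otyp hy hO this
    · refine ⟨i - 1, hN, by omega, ?_⟩
      intro s hs1 hs2
      have : s = i := by omega
      rw [this]; exact hO
    · obtain ⟨p, hp, hpi, hrun⟩ := ih (i-1) (by omega) hOprev
      refine ⟨p, hp, by omega, ?_⟩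
      intro s hs1 hs2
      rcases Nat.lt_or_ge s i with hlt | hge
      · exact hrun s hs1 (by omega)
      · have : s = i := by omega
        rw [this]; exact hO

lemma le_runlen {p i : ℕ} (hpi : p < i) (him : i < m)
    (hrun : ∀ s, p < s → s ≤ i → Otyp m u s) : i ≤ p + runlen m u p := by
  have h1 : i - p ≤ Nat.findGreatest (fun d => ∀ s, p < s → s ≤ p + d → Otyp m u s) m := by
    apply Nat.le_findGreatest (by omega)
    intro s hs1 hs2
    exact hrun s hs1 (by omega)
  rw [runlen]; omega

lemma otyp_of_le_runlen {p i : ℕ} (hpi : p < i) (hle : i ≤ p + runlen m u p) :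
    Otyp m u i := by
  have h0 : (fun d => ∀ s, p < s → s ≤ p + d → Otyp m u s) 0 := by
    intro s hs1 hs2; omega
  have hspec := Nat.findGreatest_spec (P := fun d => ∀ s, p < s → s ≤ p + d → Otyp m u s)
    (Nat.zero_le m) h0
  exact hspec i hpi (by rwa [runlen] at hle)

lemma card_FS (hy : Hyp m u b w e) : (FS m u).card = m + 1 - w := by
  have hFS : FS m u = ((range (m+1)).filter (fun i => ∀ j < i, u j ≠ u i)) := by
    ext i; simp [FS, freshV]
  rw [hFS, card_fresh_filter]
  exact hy.hV

lemma w_le_m (hy : Hyp m u b w e) : w ≤ m := by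
  have h0 : (0 : ℕ) ∈ FS m u := by
    rw [FS, Finset.mem_filter, Finset.mem_range]
    exact ⟨by omega, fun j hj => by omega⟩
  have := Finset.card_pos.mpr ⟨0, h0⟩
  have := card_FS hy
  omega

lemma card_NWE (hy : Hyp m u b w e) :
    ((range m).filter (fun i => ∀ j < i, ed u j ≠ ed u i)).card = m - e := by
  rw [card_fresh_filter]; exact hy.hE

lemma card_Fsteps (hy : Hyp m u b w e) :
    ((range m).filter (Ftyp m u)).card = m + 1 - w - 1 := by
  have himg : ((range m).filter (Ftyp m u)).image (· + 1) = (FS m u).erase 0 := by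
    ext a
    simp only [Finset.mem_image, Finset.mem_filter, Finset.mem_range, Finset.mem_erase,
      FS, Ftyp]
    constructor
    · rintro ⟨i, ⟨hi, _, hf⟩, rfl⟩
      exact ⟨by omega, by omega, hf⟩
    · rintro ⟨ha0, ham, hfa⟩
      exact ⟨a - 1, ⟨by omega, by omega, by rwa [Nat.sub_add_cancel (by omega)]⟩,
        by omega⟩
  have hcard : ((range m).filter (Ftyp m u)).card = ((FS m u).erase 0).card := by
    rw [← himg, Finset.card_image_of_injective _ (add_left_injective 1)]
  rw [hcard, Finset.card_erase_of_mem, card_FS hy]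
  rw [FS, Finset.mem_filter, Finset.mem_range]
  exact ⟨by omega, fun j hj => by omega⟩

lemma NS_eq : NS m u = ((range m).filter (fun i => ∀ j < i, ed u j ≠ ed u i)) \
    ((range m).filter (Ftyp m u)) := by
  ext i
  simp only [NS, Ntyp, Ftyp, Finset.mem_sdiff, Finset.mem_filter, Finset.mem_range]
  tauto

lemma Fsteps_subset : ((range m).filter (Ftyp m u)) ⊆
    ((range m).filter (fun i => ∀ j < i, ed u j ≠ ed u i)) := by
  intro i hi
  simp only [Finset.mem_filter, Finset.mem_range, Ftyp] at hi ⊢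
  exact ⟨hi.1, newE_of_fresh hi.2.2⟩

lemma card_NS (hy : Hyp m u b w e) : (NS m u).card = w - e := by
  rcases Nat.eq_zero_or_pos m with hm | hm
  · have hw : w = 0 := by have := w_le_m hy; omega
    have : NS m u = ∅ := by
      rw [NS, hm]; simp
    rw [this, hw]
    simp
  · have hNE1 : 1 ≤ m - e := by
      rw [← card_NWE hy]
      apply Finset.card_pos.mpr
      exact ⟨0, by simp only [Finset.mem_filter, Finset.mem_range]; exact ⟨hm, by omega⟩⟩
    have hsub : m + 1 - w - 1 ≤ m - e := by
      rw [← card_NWE hy, ← card_Fsteps hy]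
      exact Finset.card_le_card Fsteps_subset
    have hwm := w_le_m hy
    rw [NS_eq, Finset.card_sdiff_of_subset Fsteps_subset, card_NWE hy, card_Fsteps hy]
    omega

end

section
variable {n m b w e : ℕ} {u : ℕ → Fin n}

lemma mem_curA_succ (hy : Hyp m u b w e) {i : ℕ} (hO : Otyp m u i) :
    u (i+1) ∈ curA u i := by
  obtain ⟨him, j, hj, heq⟩ := hO
  have hi1 : 1 ≤ i := by omega
  rw [curA, Finset.mem_filter]
  refine ⟨Finset.mem_univ _, ?_, ⟨j, hj, heq⟩⟩
  intro hcon
  have hnb := hy.nb (i-1) (by omega)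
  apply hnb
  rw [ed, ed, Nat.sub_add_cancel hi1, hcon]
  exact Sym2.eq_swap

lemma card_curA_le_deg (hy : Hyp m u b w e) {i : ℕ} (hO : Otyp m u i) :
    (curA u i).card + 1 ≤ deg m u (u i) := by
  have hi1 : 1 ≤ i := otyp_pos hO
  have him := hO.1
  have hnotmem : u (i-1) ∉ curA u i := by
    rw [curA, Finset.mem_filter]
    rintro ⟨-, hne, -⟩
    exact hne rfl
  have hcard : (curA u i).card + 1 = (insert (u (i-1)) (curA u i)).card := by
    rw [Finset.card_insert_of_notMem hnotmem]
  rw [hcard, deg]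
  apply Finset.card_le_card_of_injOn (fun x => s(u i, x))
  · intro x hx
    rw [Finset.mem_coe, Finset.mem_insert] at hx
    rw [Finset.mem_coe, Finset.mem_filter]
    constructor
    · rcases hx with rfl | hx
      · rw [EG, Finset.mem_image]
        refine ⟨i - 1, by rw [Finset.mem_range]; omega, ?_⟩
        rw [ed, Nat.sub_add_cancel hi1]
        exact Sym2.eq_swap
      · rw [curA, Finset.mem_filter] at hx
        obtain ⟨-, -, j, hj, heq⟩ := hx
        rw [EG, Finset.mem_image]
        exact ⟨j, by rw [Finset.mem_range]; omega, heq⟩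
    · exact Sym2.mem_mk_left _ _
  · intro x hx y hy' hxy
    simp only [Sym2.eq_iff] at hxy
    rcases hxy with ⟨-, h⟩ | ⟨h1, h2⟩
    · exact h
    · rw [h2, ← h1]

lemma wd_le_deg (hy : Hyp m u b w e) {i : ℕ} (hO : Otyp m u i) :
    wd u i ≤ deg m u (u i) - 2 := by
  have := card_curA_le_deg hy hO
  rw [wd]; omega

lemma sum_deg (hy : Hyp m u b w e) :
    ∑ x : Fin n, deg m u x = 2 * (EG m u).card := by
  have h1 : ∀ x : Fin n, deg m u x = ∑ z ∈ EG m u, if x ∈ z then 1 else 0 := by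
    intro x
    rw [deg, Finset.card_filter]
  calc ∑ x : Fin n, deg m u x = ∑ x : Fin n, ∑ z ∈ EG m u, if x ∈ z then 1 else 0 := by
        exact Finset.sum_congr rfl (fun x _ => h1 x)
    _ = ∑ z ∈ EG m u, ∑ x : Fin n, if x ∈ z then 1 else 0 := Finset.sum_comm
    _ = ∑ z ∈ EG m u, 2 := by
        apply Finset.sum_congr rfl
        intro z hz
        rw [EG, Finset.mem_image] at hz
        obtain ⟨j, hj, rfl⟩ := hz
        rw [Finset.mem_range] at hj
        have hne : u j ≠ u (j+1) := hy.step j hj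
        rw [← Finset.card_filter]
        rw [show univ.filter (· ∈ ed u j) = {u j, u (j+1)} by
          ext x; simp [ed, Sym2.mem_iff]]
        rw [Finset.card_insert_of_notMem (by simp [hne]), Finset.card_singleton]
    _ = 2 * (EG m u).card := by rw [Finset.sum_const, smul_eq_mul, mul_comm]

lemma mem_V_of_mem_edge {x : Fin n} {z : Sym2 (Fin n)} (hz : z ∈ EG m u) (hx : x ∈ z) :
    x ∈ (range (m+1)).image u := by
  rw [EG, Finset.mem_image] at hz
  obtain ⟨j, hj, rfl⟩ := hz
  rw [Finset.mem_range] at hj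
  rw [ed, Sym2.mem_iff] at hx
  rw [Finset.mem_image]
  rcases hx with rfl | rfl
  · exact ⟨j, by rw [Finset.mem_range]; omega, rfl⟩
  · exact ⟨j+1, by rw [Finset.mem_range]; omega, rfl⟩

lemma deg_eq_zero {x : Fin n} (hx : x ∉ (range (m+1)).image u) : deg m u x = 0 := by
  rw [deg, Finset.card_eq_zero, Finset.filter_eq_empty_iff]
  intro z hz hxz
  exact hx (mem_V_of_mem_edge hz hxz)

lemma deg_pos (hm : 1 ≤ m) {x : Fin n} (hx : x ∈ (range (m+1)).image u) :
    1 ≤ deg m u x := by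
  rw [Finset.mem_image] at hx
  obtain ⟨i, hi, rfl⟩ := hx
  rw [Finset.mem_range] at hi
  apply Finset.card_pos.mpr
  rcases Nat.lt_or_ge i m with him | him
  · refine ⟨ed u i, ?_⟩
    rw [Finset.mem_filter, EG, Finset.mem_image]
    exact ⟨⟨i, by rw [Finset.mem_range]; omega, rfl⟩, Sym2.mem_mk_left _ _⟩
  · have : i = m := by omega
    subst this
    refine ⟨ed u (i-1), ?_⟩
    rw [Finset.mem_filter, EG, Finset.mem_image]
    refine ⟨⟨i-1, by rw [Finset.mem_range]; omega, rfl⟩, ?_⟩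
    rw [ed, Nat.sub_add_cancel hm]
    exact Sym2.mem_mk_right _ _

lemma deg_two (hy : Hyp m u b w e) (hm : 1 ≤ m) {x : Fin n}
    (hx : x ∈ (range (m+1)).image u) (hx0 : x ≠ u 0) (hxm : x ≠ u m) :
    2 ≤ deg m u x := by
  rw [Finset.mem_image] at hx
  obtain ⟨i, hi, rfl⟩ := hx
  rw [Finset.mem_range] at hi
  have hi0 : i ≠ 0 := by rintro rfl; exact hx0 rfl
  have him : i ≠ m := by rintro rfl; exact hxm rfl
  have h1 : ed u (i-1) ∈ (EG m u).filter (fun z => u i ∈ z) := by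
    rw [Finset.mem_filter, EG, Finset.mem_image]
    refine ⟨⟨i-1, by rw [Finset.mem_range]; omega, rfl⟩, ?_⟩
    rw [ed, Nat.sub_add_cancel (by omega)]
    exact Sym2.mem_mk_right _ _
  have h2 : ed u i ∈ (EG m u).filter (fun z => u i ∈ z) := by
    rw [Finset.mem_filter, EG, Finset.mem_image]
    exact ⟨⟨i, by rw [Finset.mem_range]; omega, rfl⟩, Sym2.mem_mk_left _ _⟩
  have hne : ed u (i-1) ≠ ed u i := by
    have := hy.nb (i-1) (by omega)
    rwa [Nat.sub_add_cancel (by omega)] at this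
  rw [deg]
  exact Finset.one_lt_card.mpr ⟨_, h1, _, h2, hne⟩

end
section
variable {n m b w e : ℕ} {u : ℕ → Fin n}

lemma e_le (hy : Hyp m u b w e) (hm : 1 ≤ m) : e + 1 ≤ m := by
  have hNE1 : 1 ≤ m - e := by
    rw [← card_NWE hy]
    apply Finset.card_pos.mpr
    exact ⟨0, by simp only [Finset.mem_filter, Finset.mem_range]; exact ⟨hm, by omega⟩⟩
  omega

lemma sum_sub_two_le (hy : Hyp m u b w e) (hm : 1 ≤ m) :
    ∑ x : Fin n, (deg m u x - 2) ≤ 2 * (w - e) := by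
  classical
  set V : Finset (Fin n) := (range (m+1)).image u with hV
  set D1 : Finset (Fin n) := V.filter (fun x => deg m u x ≤ 1) with hD1
  set S2 : Finset (Fin n) := V \ D1 with hS2
  have hS2sub : S2 ⊆ V := Finset.sdiff_subset
  have hD1sub : D1 ⊆ V := Finset.filter_subset _ _
  have hdeg2 : ∀ x ∈ S2, 2 ≤ deg m u x := by
    intro x hx
    rw [hS2, Finset.mem_sdiff, hD1, Finset.mem_filter] at hx
    have := hx.2
    push_neg at this
    have h2 := this hx.1
    omega
  have hstep1 : ∑ x : Fin n, (deg m u x - 2) = ∑ x ∈ S2, (deg m u x - 2) := by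
    symm
    apply Finset.sum_subset (Finset.subset_univ S2)
    intro x _ hxS
    by_cases hxV : x ∈ V
    · have : x ∈ D1 := by
        by_contra hxD
        exact hxS (by rw [hS2, Finset.mem_sdiff]; exact ⟨hxV, hxD⟩)
      rw [hD1, Finset.mem_filter] at this
      omega
    · rw [deg_eq_zero hxV]
      rfl
  -- pass to integers
  have hcast : (↑(∑ x ∈ S2, (deg m u x - 2)) : ℤ) = ∑ x ∈ S2, ((deg m u x : ℤ) - 2) := by
    push_cast
    apply Finset.sum_congr rfl
    intro x hx
    have := hdeg2 x hx
    push_cast [Nat.cast_sub (by omega : 2 ≤ deg m u x)]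
    ring
  have hsplit : ∑ x ∈ S2, (deg m u x : ℤ) = ∑ x ∈ V, (deg m u x : ℤ) - ∑ x ∈ D1, (deg m u x : ℤ) := by
    rw [hS2]
    rw [Finset.sum_sdiff_eq_sub hD1sub]
  have hVuniv : ∑ x ∈ V, (deg m u x : ℤ) = 2 * ((EG m u).card : ℤ) := by
    have : ∑ x ∈ V, (deg m u x : ℤ) = ∑ x : Fin n, (deg m u x : ℤ) := by
      apply Finset.sum_subset (Finset.subset_univ V)
      intro x _ hxV
      rw [deg_eq_zero hxV]
      simp
    rw [this, ← Nat.cast_sum]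
    rw [sum_deg hy]
    push_cast
    ring
  have hD1card : D1.card ≤ 2 := by
    have hsub : D1 ⊆ {u 0, u m} := by
      intro x hx
      rw [hD1, Finset.mem_filter] at hx
      by_contra hmem
      simp only [Finset.mem_insert, Finset.mem_singleton] at hmem
      push_neg at hmem
      have := deg_two hy hm hx.1 hmem.1 hmem.2
      omega
    calc D1.card ≤ ({u 0, u m} : Finset (Fin n)).card := Finset.card_le_card hsub
      _ ≤ 2 := Finset.card_insert_le _ _ |>.trans (by simp)
  have hD1deg : (D1.card : ℤ) ≤ ∑ x ∈ D1, (deg m u x : ℤ) := by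
    calc (D1.card : ℤ) = ∑ _x ∈ D1, (1 : ℤ) := by rw [Finset.sum_const]; ring
      _ ≤ ∑ x ∈ D1, (deg m u x : ℤ) := by
          apply Finset.sum_le_sum
          intro x hx
          have := deg_pos hm (hD1sub hx)
          exact_mod_cast this
  have hcardV : V.card = m + 1 - w := hy.hV
  have hcardE : (EG m u).card = m - e := hy.hE
  have hwm := w_le_m hy
  have hem := e_le hy hm
  have hS2card : S2.card = V.card - D1.card := by
    rw [hS2, Finset.card_sdiff_of_subset hD1sub]
  have hsum2 : ∑ x ∈ S2, ((deg m u x : ℤ) - 2) =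
      ∑ x ∈ S2, (deg m u x : ℤ) - 2 * (S2.card : ℤ) := by
    rw [Finset.sum_sub_distrib, Finset.sum_const]
    push_cast
    ring
  have hD1V : D1.card ≤ V.card := Finset.card_le_card hD1sub
  -- final arithmetic
  have hfin : (↑(∑ x ∈ S2, (deg m u x - 2)) : ℤ) ≤ 2 * ((w : ℤ) - e) := by
    rw [hcast, hsum2, hsplit, hVuniv]
    have h1 : ((EG m u).card : ℤ) = (m : ℤ) - e := by rw [hcardE]; push_cast; omega
    have h2 : (V.card : ℤ) = (m : ℤ) + 1 - w := by rw [hcardV]; push_cast; omega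
    have h3 : (S2.card : ℤ) = (V.card : ℤ) - D1.card := by rw [hS2card]; push_cast; omega
    rw [h1, h3, h2]
    have hD12 : (D1.card : ℤ) ≤ 2 := by exact_mod_cast hD1card
    linarith
  rw [hstep1]
  have hle : (↑(∑ x ∈ S2, (deg m u x - 2)) : ℤ) ≤ 2 * ((w:ℤ) - e) := hfin
  have hwe : (2 * ((w:ℤ) - e)) ≤ ((2 * (w - e) : ℕ) : ℤ) ∨ (w : ℤ) - e < 0 := by
    rcases le_or_gt e w with h | h
    · left; push_cast [Nat.cast_sub h]; ring_nf; omega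
    · right; push_cast; omega
  rcases hwe with h | h
  · exact_mod_cast hle.trans h
  · have : (↑(∑ x ∈ S2, (deg m u x - 2)) : ℤ) ≤ 0 := by linarith
    have h0 : (∑ x ∈ S2, (deg m u x - 2)) = 0 := by exact_mod_cast le_antisymm this (by positivity)
    omega

end
section
variable {n m b w e : ℕ} {u : ℕ → Fin n}

lemma cc_lt (hy : Hyp m u b w e) {i : ℕ} (hO : Otyp m u i) :
    cc u i + 1 ≤ 2 ^ wd u i := by
  have hmem := mem_curA_succ hy hO
  have h1 : cc u i < (curA u i).card := rk_lt_card hmem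
  have h2 : (curA u i).card - 1 < 2 ^ ((curA u i).card - 1) := Nat.lt_two_pow_self
  rw [wd] at *
  omega

lemma range_filter_otyp (k : ℕ) :
    (range k).filter (Otyp m u) = (OS m u).filter (· < k) := by
  ext j
  simp only [Finset.mem_filter, Finset.mem_range, OS]
  constructor
  · rintro ⟨hjk, hO⟩
    exact ⟨⟨hO.1, hO⟩, hjk⟩
  · rintro ⟨⟨-, hO⟩, hjk⟩
    exact ⟨hjk, hO⟩

lemma offs_mono {i j : ℕ} (hij : i ≤ j) : offs m u i ≤ offs m u j := by
  apply Finset.sum_le_sum_of_subset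
  apply Finset.filter_subset_filter
  exact Finset.range_subset_range.mpr hij

lemma filter_range_succ_otyp {k : ℕ} (hO : Otyp m u k) :
    (range (k+1)).filter (Otyp m u) = insert k ((range k).filter (Otyp m u)) := by
  ext j
  simp only [Finset.mem_filter, Finset.mem_range, Finset.mem_insert]
  constructor
  · rintro ⟨hjk, hOj⟩
    rcases Nat.lt_or_ge j k with h | h
    · exact Or.inr ⟨h, hOj⟩
    · exact Or.inl (by omega)
  · rintro (rfl | ⟨hjk, hOj⟩)
    · exact ⟨by omega, hO⟩
    · exact ⟨by omega, hOj⟩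

lemma filter_range_succ_notyp {k : ℕ} (hO : ¬ Otyp m u k) :
    (range (k+1)).filter (Otyp m u) = (range k).filter (Otyp m u) := by
  ext j
  simp only [Finset.mem_filter, Finset.mem_range]
  constructor
  · rintro ⟨hjk, hOj⟩
    refine ⟨?_, hOj⟩
    rcases Nat.lt_or_ge j k with h | h
    · exact h
    · exfalso; have : j = k := by omega
      exact hO (this ▸ hOj)
  · rintro ⟨hjk, hOj⟩
    exact ⟨by omega, hOj⟩

lemma offs_succ_otyp {k : ℕ} (hO : Otyp m u k) :
    offs m u (k+1) = offs m u k + wd u k := by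
  rw [offs, offs, filter_range_succ_otyp hO, Finset.sum_insert (by simp)]
  ring

noncomputable def lows (m : ℕ) (u : ℕ → Fin n) (k : ℕ) : ℕ :=
  ∑ j ∈ (range k).filter (Otyp m u), cc u j * 2 ^ offs m u j

lemma lows_lt (hy : Hyp m u b w e) : ∀ k, lows m u k < 2 ^ offs m u k := by
  intro k
  induction k with
  | zero => simp [lows, offs]
  | succ k ih =>
    by_cases hO : Otyp m u k
    · rw [lows, filter_range_succ_otyp hO, Finset.sum_insert (by simp),
        offs_succ_otyp hO]
      have h1 : lows m u k < 2 ^ offs m u k := ih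
      have h2 := cc_lt hy hO
      calc cc u k * 2 ^ offs m u k + ∑ j ∈ (range k).filter (Otyp m u), cc u j * 2 ^ offs m u j
          = cc u k * 2 ^ offs m u k + lows m u k := by rw [lows]
        _ < (cc u k + 1) * 2 ^ offs m u k := by ring_nf; omega
        _ ≤ 2 ^ wd u k * 2 ^ offs m u k := Nat.mul_le_mul_right _ h2
        _ = 2 ^ (offs m u k + wd u k) := by rw [← pow_add]; ring_nf
    · rw [lows, filter_range_succ_notyp hO, offs, filter_range_succ_notyp hO]
      exact ih

lemma Btot_eq_lows : Btot m u = lows m u m := rfl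

lemma Btot_lt (hy : Hyp m u b w e) : Btot m u < 2 ^ offs m u m := lows_lt hy m

lemma offs_le (hy : Hyp m u b w e) : offs m u m ≤ 2 * b * (w - e) := by
  rcases Nat.eq_zero_or_pos m with hm | hm
  · subst hm; simp [offs]
  · have h1 : offs m u m ≤ ∑ j ∈ (range m).filter (Otyp m u), (deg m u (u j) - 2) := by
      apply Finset.sum_le_sum
      intro j hj
      rw [Finset.mem_filter] at hj
      exact wd_le_deg hy hj.2
    have h2 : ∑ j ∈ (range m).filter (Otyp m u), (deg m u (u j) - 2)
        = ∑ x ∈ ((range m).filter (Otyp m u)).image u,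
            (((range m).filter (Otyp m u)).filter (fun j => u j = x)).card • (deg m u x - 2) :=
      Finset.sum_comp (fun x => deg m u x - 2) u
    have h3 : ∀ x : Fin n,
        (((range m).filter (Otyp m u)).filter (fun j => u j = x)).card ≤ b := by
      intro x
      calc (((range m).filter (Otyp m u)).filter (fun j => u j = x)).card
          ≤ ((range (m+1)).filter (fun i => u i = x)).card := by
            apply Finset.card_le_card
            intro j hj
            simp only [Finset.mem_filter, Finset.mem_range] at hj ⊢
            exact ⟨by omega, hj.2⟩
        _ ≤ b := hy.hb x
    calc offs m u m ≤ ∑ j ∈ (range m).filter (Otyp m u), (deg m u (u j) - 2) := h1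
      _ = _ := h2
      _ ≤ ∑ x ∈ ((range m).filter (Otyp m u)).image u, b * (deg m u x - 2) := by
          apply Finset.sum_le_sum
          intro x hx
          rw [smul_eq_mul]
          exact Nat.mul_le_mul_right _ (h3 x)
      _ ≤ ∑ x : Fin n, b * (deg m u x - 2) := by
          apply Finset.sum_le_sum_of_subset
          exact Finset.subset_univ _
      _ = b * ∑ x : Fin n, (deg m u x - 2) := by rw [Finset.mul_sum]
      _ ≤ b * (2 * (w - e)) := Nat.mul_le_mul_left _ (sum_sub_two_le hy hm)
      _ = 2 * b * (w - e) := by ring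

lemma Btot_lt_final (hy : Hyp m u b w e) : Btot m u < 2 ^ (2 * b * (w - e)) := by
  have h1 := Btot_lt hy
  have h2 := offs_le (u := u) hy
  exact lt_of_lt_of_le h1 (Nat.pow_le_pow_right (by omega) h2)

end
section
variable {n m b w e : ℕ} {u u' : ℕ → Fin n}

lemma extract (hy : Hyp m u b w e) {i : ℕ} (hO : Otyp m u i) :
    Btot m u / 2 ^ offs m u i % 2 ^ wd u i = cc u i := by
  classical
  have hiOS : i ∈ OS m u := by
    rw [OS, Finset.mem_filter, Finset.mem_range]; exact ⟨hO.1, hO⟩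
  set f : ℕ → ℕ := fun j => cc u j * 2 ^ offs m u j with hf
  have hsplit1 : Btot m u = ∑ j ∈ (OS m u).filter (· < i), f j
      + ∑ j ∈ (OS m u).filter (fun j => ¬ j < i), f j := by
    rw [show Btot m u = ∑ j ∈ OS m u, f j from rfl]
    exact (Finset.sum_filter_add_sum_filter_not (OS m u) (· < i) f).symm
  have hlows : ∑ j ∈ (OS m u).filter (· < i), f j = lows m u i := by
    rw [lows, range_filter_otyp]
  have hins : (OS m u).filter (fun j => ¬ j < i) = insert i ((OS m u).filter (fun j => i < j)) := by
    ext j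
    simp only [Finset.mem_filter, Finset.mem_insert, not_lt]
    constructor
    · rintro ⟨hjOS, hij⟩
      rcases Nat.eq_or_lt_of_le hij with h | h
      · exact Or.inl h.symm
      · exact Or.inr ⟨hjOS, h⟩
    · rintro (rfl | ⟨hjOS, hij⟩)
      · exact ⟨hiOS, le_refl _⟩
      · exact ⟨hjOS, by omega⟩
  have hnotmem : i ∉ (OS m u).filter (fun j => i < j) := by
    simp only [Finset.mem_filter]
    rintro ⟨-, h⟩; omega
  set H : ℕ := ∑ j ∈ (OS m u).filter (fun j => i < j),
      cc u j * 2 ^ (offs m u j - (offs m u i + wd u i)) with hH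
  have hhis : ∑ j ∈ (OS m u).filter (fun j => i < j), f j
      = 2 ^ (offs m u i + wd u i) * H := by
    rw [hH, Finset.mul_sum]
    apply Finset.sum_congr rfl
    intro j hj
    simp only [Finset.mem_filter, OS, Finset.mem_range] at hj
    obtain ⟨⟨hjm, hOj⟩, hij⟩ := hj
    have hle : offs m u i + wd u i ≤ offs m u j := by
      rw [← offs_succ_otyp hO]
      exact offs_mono (by omega)
    have h2 : 2 ^ offs m u j = 2 ^ (offs m u i + wd u i) * 2 ^ (offs m u j - (offs m u i + wd u i)) := by
      rw [← pow_add, Nat.add_sub_cancel' hle]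
    show cc u j * 2 ^ offs m u j = _
    rw [h2]; ring
  have hBtot : Btot m u = lows m u i + (cc u i + 2 ^ wd u i * H) * 2 ^ offs m u i := by
    rw [hsplit1, hlows, hins, Finset.sum_insert hnotmem, hhis]
    have : (2:ℕ) ^ (offs m u i + wd u i) = 2 ^ offs m u i * 2 ^ wd u i := pow_add 2 _ _
    rw [this, hf]
    ring
  rw [hBtot]
  rw [Nat.add_mul_div_right _ _ (by positivity),
    Nat.div_eq_of_lt (lows_lt hy i), Nat.zero_add, Nat.add_mul_mod_self_left,
    Nat.mod_eq_of_lt (by have := cc_lt hy hO; omega)]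

lemma ed_congr {i : ℕ} (hpre : ∀ j ≤ i, u j = u' j) {j : ℕ} (hj : j + 1 ≤ i) :
    ed u j = ed u' j := by
  rw [ed, ed, hpre j (by omega), hpre (j+1) hj]

lemma freshV_congr {i : ℕ} (hpre : ∀ j ≤ i, u j = u' j) {j : ℕ} (hj : j ≤ i) :
    freshV u j ↔ freshV u' j := by
  unfold freshV
  constructor <;> intro h k hk
  · rw [← hpre k (by omega), ← hpre j hj]; exact h k hk
  · rw [hpre k (by omega), hpre j hj]; exact h k hk

lemma otyp_congr {i : ℕ} (hpre : ∀ j ≤ i, u j = u' j) {j : ℕ} (hj : j + 1 ≤ i) :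
    Otyp m u j ↔ Otyp m u' j := by
  unfold Otyp
  have hiff : ∀ k, k < j → ((ed u k = ed u j) ↔ (ed u' k = ed u' j)) := by
    intro k hk
    rw [ed_congr hpre (show k+1 ≤ i by omega), ed_congr hpre hj]
  constructor
  · rintro ⟨hjm, k, hk, hek⟩
    exact ⟨hjm, k, hk, (hiff k hk).1 hek⟩
  · rintro ⟨hjm, k, hk, hek⟩
    exact ⟨hjm, k, hk, (hiff k hk).2 hek⟩

lemma curA_congr {i : ℕ} (hpre : ∀ j ≤ i, u j = u' j) :
    curA u i = curA u' i := by
  ext x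
  unfold curA
  simp only [Finset.mem_filter, Finset.mem_univ, true_and]
  have h1 : u (i-1) = u' (i-1) := hpre _ (by omega)
  have h2 : u i = u' i := hpre _ (le_refl _)
  have hiff : ∀ j, j < i → ((ed u j = s(u i, x)) ↔ (ed u' j = s(u' i, x))) := by
    intro j hj
    rw [ed_congr hpre (show j+1 ≤ i by omega), h2]
  constructor
  · rintro ⟨hne, j, hj, hej⟩
    exact ⟨by rwa [← h1], j, hj, (hiff j hj).1 hej⟩
  · rintro ⟨hne, j, hj, hej⟩
    exact ⟨by rwa [h1], j, hj, (hiff j hj).2 hej⟩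

lemma wd_congr {i : ℕ} (hpre : ∀ j ≤ i, u j = u' j) : wd u i = wd u' i := by
  rw [wd, wd, curA_congr hpre]

lemma offs_congr {i : ℕ} (hpre : ∀ j ≤ i, u j = u' j) : offs m u i = offs m u' i := by
  unfold offs
  have hset : (range i).filter (Otyp m u) = (range i).filter (Otyp m u') := by
    ext j
    simp only [Finset.mem_filter, Finset.mem_range]
    constructor <;> rintro ⟨hj, hOj⟩
    · exact ⟨hj, (otyp_congr hpre (by omega)).1 hOj⟩
    · exact ⟨hj, (otyp_congr hpre (by omega)).2 hOj⟩
  rw [hset]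
  apply Finset.sum_congr rfl
  intro j hj
  simp only [Finset.mem_filter, Finset.mem_range] at hj
  exact wd_congr (fun k hk => hpre k (by omega))

lemma rk_FS {i : ℕ} (hi : i ≤ m + 1) :
    rk (FS m u) i = ((range i).filter (freshV u)).card := by
  rw [rk, FS]
  congr 1
  ext j
  simp only [Finset.mem_filter, Finset.mem_range]
  constructor
  · rintro ⟨⟨hj1, hj2⟩, hj3⟩
    exact ⟨hj3, hj2⟩
  · rintro ⟨hj1, hj2⟩
    exact ⟨⟨by omega, hj2⟩, hj1⟩

end
section
variable {n : ℕ}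

lemma cardFS' {m b w e : ℕ} {u : ℕ → Fin n} (hy : Hyp m u b w e) :
    (FS m u).card = m - w + 1 := by
  have h1 := card_FS hy
  have h2 := w_le_m hy
  omega

lemma mem_NS_lt {m b w e : ℕ} {u : ℕ → Fin n} (hy : Hyp m u b w e) {x : ℕ}
    (hx : x ∈ NS m u) : x < m := by
  simp only [NS, Finset.mem_filter, Finset.mem_range] at hx
  exact hx.1

noncomputable def enc {m b w e : ℕ} {u : ℕ → Fin n} (hy : Hyp m u b w e) :
    (Fin (m - w + 1) → Fin n) ×
    (Fin (w - e) → Fin (m+1) × Fin (m+1) × Fin (m+1)) ×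
    Fin (2 ^ (2 * b * (w - e))) :=
  ( fun k => u ((FS m u).orderEmbOfFin (cardFS' hy) k),
    fun k =>
      (⟨(NS m u).orderEmbOfFin (card_NS hy) k, by
          have h := mem_NS_lt hy (Finset.orderEmbOfFin_mem (NS m u) (card_NS hy) k)
          omega⟩,
       ⟨tgt u ((NS m u).orderEmbOfFin (card_NS hy) k), by
          have h1 : tgt u ((NS m u).orderEmbOfFin (card_NS hy) k)
              ≤ (NS m u).orderEmbOfFin (card_NS hy) k + 1 :=
            Nat.find_min' _ rfl
          have h := mem_NS_lt hy (Finset.orderEmbOfFin_mem (NS m u) (card_NS hy) k)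
          omega⟩,
       ⟨runlen m u ((NS m u).orderEmbOfFin (card_NS hy) k), by
          have h1 : runlen m u ((NS m u).orderEmbOfFin (card_NS hy) k) ≤ m :=
            Nat.findGreatest_le m
          omega⟩),
    ⟨Btot m u, Btot_lt_final hy⟩ )

theorem enc_inj {m b w e : ℕ} {u u' : ℕ → Fin n} (hy : Hyp m u b w e) (hy' : Hyp m u' b w e)
    (h : enc hy = enc hy') : ∀ i, i ≤ m → u i = u' i := by
  have hfv : ∀ k, u ((FS m u).orderEmbOfFin (cardFS' hy) k)
      = u' ((FS m u').orderEmbOfFin (cardFS' hy') k) := by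
    intro k
    have h1 : (enc hy).1 = (enc hy').1 := by rw [h]
    exact congrFun h1 k
  have hpos : ∀ k, (((NS m u).orderEmbOfFin (card_NS hy) k) : ℕ)
      = (((NS m u').orderEmbOfFin (card_NS hy') k) : ℕ) := by
    intro k
    have h2 : (enc hy).2.1 = (enc hy').2.1 := by rw [h]
    exact congrArg (fun z => (Prod.fst z).val) (congrFun h2 k)
  have htgt : ∀ k, tgt u ((NS m u).orderEmbOfFin (card_NS hy) k)
      = tgt u' ((NS m u').orderEmbOfFin (card_NS hy') k) := by
    intro k
    have h2 : (enc hy).2.1 = (enc hy').2.1 := by rw [h]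
    exact congrArg (fun z => (Prod.fst (Prod.snd z)).val) (congrFun h2 k)
  have hrun : ∀ k, runlen m u ((NS m u).orderEmbOfFin (card_NS hy) k)
      = runlen m u' ((NS m u').orderEmbOfFin (card_NS hy') k) := by
    intro k
    have h2 : (enc hy).2.1 = (enc hy').2.1 := by rw [h]
    exact congrArg (fun z => (Prod.snd (Prod.snd z)).val) (congrFun h2 k)
  have hB : Btot m u = Btot m u' := by
    have h3 : (enc hy).2.2 = (enc hy').2.2 := by rw [h]
    exact congrArg Fin.val h3
  intro i
  induction i using Nat.strong_induction_on with
  | _ i ih =>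
    intro him
    rcases Nat.eq_zero_or_pos i with rfl | hipos
    · have hm0 : (0:ℕ) ∈ FS m u := by
        rw [FS, Finset.mem_filter, Finset.mem_range]
        exact ⟨by omega, fun j hj => by omega⟩
      have hm0' : (0:ℕ) ∈ FS m u' := by
        rw [FS, Finset.mem_filter, Finset.mem_range]
        exact ⟨by omega, fun j hj => by omega⟩
      have hr0 : rk (FS m u) 0 = 0 := by
        rw [rk, Finset.card_eq_zero, Finset.filter_eq_empty_iff]
        intro j _
        omega
      have hr0' : rk (FS m u') 0 = 0 := by
        rw [rk, Finset.card_eq_zero, Finset.filter_eq_empty_iff]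
        intro j _
        omega
      have e1 := orderEmbOfFin_of_rk (cardFS' hy) hm0 hr0 (by omega)
      have e1' := orderEmbOfFin_of_rk (cardFS' hy') hm0' hr0' (by omega)
      have hfv0 := hfv ⟨0, by omega⟩
      rw [e1, e1'] at hfv0
      exact hfv0
    · obtain ⟨s, rfl⟩ : ∃ s, i = s + 1 := ⟨i - 1, by omega⟩
      have hsm : s < m := by omega
      have hpre : ∀ j ≤ s, u j = u' j := fun j hj => ih j (by omega) (by omega)
      by_cases hcn : ∃ k, (((NS m u).orderEmbOfFin (card_NS hy) k) : ℕ) = s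
      · -- N step
        obtain ⟨k, hk⟩ := hcn
        have hk' : (((NS m u').orderEmbOfFin (card_NS hy') k) : ℕ) = s := by
          rw [← hpos k]; exact hk
        have hNs : Ntyp m u s := by
          have hmem := Finset.orderEmbOfFin_mem (NS m u) (card_NS hy) k
          rw [hk] at hmem
          simp only [NS, Finset.mem_filter] at hmem
          exact hmem.2
        have hNs' : Ntyp m u' s := by
          have hmem := Finset.orderEmbOfFin_mem (NS m u') (card_NS hy') k
          rw [hk'] at hmem
          simp only [NS, Finset.mem_filter] at hmem
          exact hmem.2
        have htg : tgt u s = tgt u' s := by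
          have hh := htgt k
          rw [hk, hk'] at hh
          exact hh
        have ht1 : u (tgt u s) = u (s+1) := Nat.find_spec (⟨s+1, rfl⟩ : ∃ j, u j = u (s+1))
        have ht1' : u' (tgt u' s) = u' (s+1) := Nat.find_spec (⟨s+1, rfl⟩ : ∃ j, u' j = u' (s+1))
        have hle : tgt u s ≤ s := by
          have hnf := hNs.2.2
          rw [freshV] at hnf
          push_neg at hnf
          obtain ⟨j, hj, hje⟩ := hnf
          have := Nat.find_min' (⟨s+1, rfl⟩ : ∃ j, u j = u (s+1)) hje
          rw [tgt]; omega
        calc u (s+1) = u (tgt u s) := ht1.symm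
          _ = u' (tgt u s) := hpre _ hle
          _ = u' (tgt u' s) := by rw [htg]
          _ = u' (s+1) := ht1'
      · by_cases hco : ∃ k, (((NS m u).orderEmbOfFin (card_NS hy) k) : ℕ) < s ∧
            s ≤ ((NS m u).orderEmbOfFin (card_NS hy) k : ℕ)
              + runlen m u ((NS m u).orderEmbOfFin (card_NS hy) k)
        · -- O step
          obtain ⟨k, hk1, hk2⟩ := hco
          have hOs : Otyp m u s := otyp_of_le_runlen hk1 hk2
          have hOs' : Otyp m u' s := by
            apply otyp_of_le_runlen (p := ((NS m u').orderEmbOfFin (card_NS hy') k : ℕ))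
            · rw [← hpos k]; exact hk1
            · rw [← hrun k, ← hpos k]; exact hk2
          have hA : curA u s = curA u' s := curA_congr hpre
          have hoffs : offs m u s = offs m u' s := offs_congr hpre
          have hwd : wd u s = wd u' s := wd_congr hpre
          have hcc : cc u s = cc u' s := by
            rw [← extract hy hOs, ← extract hy' hOs', hB, hoffs, hwd]
          have hm1 : u (s+1) ∈ curA u s := mem_curA_succ hy hOs
          have hm2 : u' (s+1) ∈ curA u s := by rw [hA]; exact mem_curA_succ hy' hOs'
          apply rk_injOn hm1 hm2
          have hval : rk (curA u s) (u' (s+1)) = cc u' s := by rw [hA]; rfl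
          rw [hval, ← hcc]
          rfl
        · -- F step
          have hnN : ¬ Ntyp m u s := by
            intro hN
            apply hcn
            have hmem : s ∈ NS m u := by
              rw [NS, Finset.mem_filter, Finset.mem_range]; exact ⟨hsm, hN⟩
            have hrg : s ∈ Set.range ⇑((NS m u).orderEmbOfFin (card_NS hy)) := by
              rw [Finset.range_orderEmbOfFin]
              exact hmem
            obtain ⟨k, hkk⟩ := hrg
            exact ⟨k, by rw [hkk]⟩
          have hnO : ¬ Otyp m u s := by
            intro hO
            apply hco
            obtain ⟨p, hNp, hps, hrunp⟩ := anchor hy s hO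
            have hmem : p ∈ NS m u := by
              rw [NS, Finset.mem_filter, Finset.mem_range]; exact ⟨hNp.1, hNp⟩
            have hrg : p ∈ Set.range ⇑((NS m u).orderEmbOfFin (card_NS hy)) := by
              rw [Finset.range_orderEmbOfFin]
              exact hmem
            obtain ⟨k, hkk⟩ := hrg
            refine ⟨k, by rw [hkk]; exact hps, ?_⟩
            rw [hkk]
            exact le_runlen hps hsm hrunp
          have hnN' : ¬ Ntyp m u' s := by
            intro hN
            apply hcn
            have hmem : s ∈ NS m u' := by
              rw [NS, Finset.mem_filter, Finset.mem_range]; exact ⟨hsm, hN⟩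
            have hrg : s ∈ Set.range ⇑((NS m u').orderEmbOfFin (card_NS hy')) := by
              rw [Finset.range_orderEmbOfFin]
              exact hmem
            obtain ⟨k, hkk⟩ := hrg
            exact ⟨k, by rw [hpos k, hkk]⟩
          have hnO' : ¬ Otyp m u' s := by
            intro hO
            apply hco
            obtain ⟨p, hNp, hps, hrunp⟩ := anchor hy' s hO
            have hmem : p ∈ NS m u' := by
              rw [NS, Finset.mem_filter, Finset.mem_range]; exact ⟨hNp.1, hNp⟩
            have hrg : p ∈ Set.range ⇑((NS m u').orderEmbOfFin (card_NS hy')) := by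
              rw [Finset.range_orderEmbOfFin]
              exact hmem
            obtain ⟨k, hkk⟩ := hrg
            refine ⟨k, by rw [hpos k, hkk]; exact hps, ?_⟩
            rw [hrun k, hpos k, hkk]
            exact le_runlen hps hsm hrunp
          have hFs : Ftyp m u s := by
            rcases type_partition (u := u) hsm with hh | hh | hh
            · exact hh
            · exact absurd hh hnN
            · exact absurd hh hnO
          have hFs' : Ftyp m u' s := by
            rcases type_partition (u := u') hsm with hh | hh | hh
            · exact hh
            · exact absurd hh hnN'
            · exact absurd hh hnO'
          have hfr : freshV u (s+1) := hFs.2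
          have hfr' : freshV u' (s+1) := hFs'.2
          have hrk : rk (FS m u) (s+1) = ((range (s+1)).filter (freshV u)).card :=
            rk_FS (by omega)
          have hmemFS : (s+1) ∈ FS m u := by
            rw [FS, Finset.mem_filter, Finset.mem_range]
            exact ⟨by omega, hfr⟩
          have hmemFS' : (s+1) ∈ FS m u' := by
            rw [FS, Finset.mem_filter, Finset.mem_range]
            exact ⟨by omega, hfr'⟩
          have hrlt : ((range (s+1)).filter (freshV u)).card < m - w + 1 := by
            have hx := rk_lt_card hmemFS
            rw [hrk] at hx
            rw [cardFS' hy] at hx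
            exact hx
          have hreq : ((range (s+1)).filter (freshV u')).card
              = ((range (s+1)).filter (freshV u)).card := by
            congr 1
            ext j
            simp only [Finset.mem_filter, Finset.mem_range]
            constructor
            · rintro ⟨hj, hfj⟩
              exact ⟨hj, (freshV_congr hpre (by omega : j ≤ s)).2 hfj⟩
            · rintro ⟨hj, hfj⟩
              exact ⟨hj, (freshV_congr hpre (by omega : j ≤ s)).1 hfj⟩
          have hrk' : rk (FS m u') (s+1) = ((range (s+1)).filter (freshV u)).card := by
            rw [rk_FS (by omega : s + 1 ≤ m + 1), hreq]
          have he1 := orderEmbOfFin_of_rk (cardFS' hy) hmemFS hrk hrlt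
          have he1' := orderEmbOfFin_of_rk (cardFS' hy') hmemFS' hrk' hrlt
          have hfvr := hfv ⟨((range (s+1)).filter (freshV u)).card, hrlt⟩
          rw [he1, he1'] at hfvr
          exact hfvr

end
section
variable {n : ℕ}

def U (m : ℕ) (v : Fin (m+1) → Fin n) : ℕ → Fin n :=
  fun i => v ⟨min i m, Nat.lt_succ_of_le (min_le_right i m)⟩

lemma U_eq {m : ℕ} (v : Fin (m+1) → Fin n) {i : ℕ} (h : i ≤ m) :
    U m v i = v ⟨i, by omega⟩ := by
  rw [U]
  congr 1
  exact Fin.ext (by simp [Nat.min_eq_left h])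

lemma mkHyp {m b w e : ℕ} (v : Fin (m+1) → Fin n)
    (hv : (∀ i : Fin m, v i.castSucc ≠ v i.succ) ∧
        ((Finset.univ.image v).card = m + 1 - w) ∧
        (((Finset.univ : Finset (Fin m)).image
            (fun i => s(v i.castSucc, v i.succ))).card = m - e) ∧
        (∀ x : Fin n, ({i : Fin (m + 1) | v i = x} : Finset (Fin (m + 1))).card ≤ b) ∧
        (∀ i j : Fin m, (j : ℕ) = (i : ℕ) + 1 →
          s(v i.castSucc, v i.succ) ≠ s(v j.castSucc, v j.succ))) :
    Hyp m (U m v) b w e := by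
  obtain ⟨h1, h2, h3, h4, h5⟩ := hv
  have hUc : ∀ (i : Fin m), U m v (i : ℕ) = v i.castSucc := by
    intro i
    rw [U_eq v (by omega : (i:ℕ) ≤ m)]
    exact congrArg v (Fin.ext (by simp))
  have hUs : ∀ (i : Fin m), U m v ((i : ℕ)+1) = v i.succ := by
    intro i
    rw [U_eq v (by omega : (i:ℕ)+1 ≤ m)]
    exact congrArg v (Fin.ext (by simp))
  have hed : ∀ (i : Fin m), ed (U m v) (i : ℕ) = s(v i.castSucc, v i.succ) := by
    intro i
    rw [ed, hUc i, hUs i]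
  constructor
  · intro i hi
    rw [show U m v i = v ((⟨i, hi⟩ : Fin m).castSucc) from hUc ⟨i, hi⟩,
      show U m v (i+1) = v ((⟨i, hi⟩ : Fin m).succ) from hUs ⟨i, hi⟩]
    exact h1 ⟨i, hi⟩
  · intro i hi hcon
    apply h5 ⟨i, by omega⟩ ⟨i+1, hi⟩ (by simp)
    rw [← hed ⟨i, by omega⟩, ← hed ⟨i+1, hi⟩]
    exact hcon
  · have himg : (range (m+1)).image (U m v) = Finset.univ.image v := by
      ext y
      simp only [Finset.mem_image, Finset.mem_range, Finset.mem_univ, true_and]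
      constructor
      · rintro ⟨i, hi, rfl⟩
        exact ⟨⟨i, hi⟩, (U_eq v (by omega : i ≤ m)).symm⟩
      · rintro ⟨i, rfl⟩
        exact ⟨(i : ℕ), i.isLt, U_eq v (by omega : (i:ℕ) ≤ m)⟩
    rw [himg]
    exact h2
  · have himg : EG m (U m v) = (Finset.univ : Finset (Fin m)).image
        (fun i => s(v i.castSucc, v i.succ)) := by
      ext z
      simp only [EG, Finset.mem_image, Finset.mem_range, Finset.mem_univ, true_and]
      constructor
      · rintro ⟨i, hi, rfl⟩
        exact ⟨⟨i, hi⟩, (hed ⟨i, hi⟩).symm⟩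
      · rintro ⟨i, rfl⟩
        exact ⟨(i : ℕ), i.isLt, hed i⟩
    rw [himg]
    exact h3
  · intro x
    have hset : (range (m+1)).filter (fun i => U m v i = x)
        = (Finset.univ.filter (fun i : Fin (m+1) => v i = x)).image Fin.val := by
      ext j
      simp only [Finset.mem_filter, Finset.mem_range, Finset.mem_image, Finset.mem_univ,
        true_and]
      constructor
      · rintro ⟨hj, hval⟩
        refine ⟨⟨j, hj⟩, ?_, rfl⟩
        rw [← U_eq v (by omega : j ≤ m)]
        exact hval
      · rintro ⟨i, hvi, rfl⟩
        exact ⟨i.isLt, by rw [U_eq v (by omega : (i:ℕ) ≤ m)]; exact hvi⟩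
    rw [hset, Finset.card_image_of_injective _ Fin.val_injective]
    have hx := h4 x
    have : ({i : Fin (m + 1) | v i = x} : Finset (Fin (m + 1)))
        = Finset.univ.filter (fun i : Fin (m+1) => v i = x) := by
      ext i; simp
    rw [this] at hx
    exact hx

end
end WalkBound

open WalkBound in
/-- Counting walks in the complete graph `K_n`: the number of walks of length `m`
(sequences of vertices with consecutive vertices distinct) having exactly `m+1-w`
distinct vertices, exactly `m-e` distinct edges, no vertex repeated more than `b`
times, and no edge repeated twice in a row, is at most
`2·n^{m-w+1}·(m+1)^{4(w-e)}·2^{2b(w-e)}`. -/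
theorem walk_count_bound (n m b w e : ℕ) :
    Nat.card {v : Fin (m + 1) → Fin n //
        (∀ i : Fin m, v i.castSucc ≠ v i.succ) ∧
        ((Finset.univ.image v).card = m + 1 - w) ∧
        (((Finset.univ : Finset (Fin m)).image
            (fun i => s(v i.castSucc, v i.succ))).card = m - e) ∧
        (∀ x : Fin n, ({i : Fin (m + 1) | v i = x} : Finset (Fin (m + 1))).card ≤ b) ∧
        (∀ i j : Fin m, (j : ℕ) = (i : ℕ) + 1 →
          s(v i.castSucc, v i.succ) ≠ s(v j.castSucc, v j.succ))}
      ≤ 2 * n ^ (m - w + 1) * (m + 1) ^ (4 * (w - e)) * 2 ^ (2 * b * (w - e)) := by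
  classical
  have hcard : Nat.card ((Fin (m - w + 1) → Fin n) ×
          (Fin (w - e) → Fin (m+1) × Fin (m+1) × Fin (m+1)) ×
          Fin (2 ^ (2 * b * (w - e))))
      = n ^ (m - w + 1) * ((m+1) * ((m+1) * (m+1))) ^ (w - e) * 2 ^ (2 * b * (w - e)) := by
    simp [Nat.card_eq_fintype_card, mul_assoc]
  have hpow : ((m+1) * ((m+1) * (m+1))) ^ (w - e) ≤ (m + 1) ^ (4 * (w - e)) := by
    have h3 : ((m+1) * ((m+1) * (m+1))) = (m+1)^3 := by ring
    rw [h3, ← pow_mul]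
    apply Nat.pow_le_pow_right <;> omega
  have hfinal : n ^ (m - w + 1) * ((m+1) * ((m+1) * (m+1))) ^ (w - e) * 2 ^ (2 * b * (w - e))
      ≤ 2 * n ^ (m - w + 1) * (m + 1) ^ (4 * (w - e)) * 2 ^ (2 * b * (w - e)) := by
    calc n ^ (m - w + 1) * ((m+1) * ((m+1) * (m+1))) ^ (w - e) * 2 ^ (2 * b * (w - e))
        ≤ n ^ (m - w + 1) * (m + 1) ^ (4 * (w - e)) * 2 ^ (2 * b * (w - e)) :=
          Nat.mul_le_mul_right _ (Nat.mul_le_mul_left _ hpow)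
      _ ≤ 2 * (n ^ (m - w + 1) * (m + 1) ^ (4 * (w - e)) * 2 ^ (2 * b * (w - e))) :=
          Nat.le_mul_of_pos_left _ (by omega)
      _ = 2 * n ^ (m - w + 1) * (m + 1) ^ (4 * (w - e)) * 2 ^ (2 * b * (w - e)) := by ring
  have key : Nat.card {v : Fin (m + 1) → Fin n //
        (∀ i : Fin m, v i.castSucc ≠ v i.succ) ∧
        ((Finset.univ.image v).card = m + 1 - w) ∧
        (((Finset.univ : Finset (Fin m)).image
            (fun i => s(v i.castSucc, v i.succ))).card = m - e) ∧
        (∀ x : Fin n, ({i : Fin (m + 1) | v i = x} : Finset (Fin (m + 1))).card ≤ b) ∧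
        (∀ i j : Fin m, (j : ℕ) = (i : ℕ) + 1 →
          s(v i.castSucc, v i.succ) ≠ s(v j.castSucc, v j.succ))}
      ≤ Nat.card ((Fin (m - w + 1) → Fin n) ×
          (Fin (w - e) → Fin (m+1) × Fin (m+1) × Fin (m+1)) ×
          Fin (2 ^ (2 * b * (w - e)))) := by
    apply Nat.card_le_card_of_injective (fun x => enc (mkHyp x.1 x.2))
    intro x x' hxx
    apply Subtype.ext
    funext i
    have hui := enc_inj (mkHyp x.1 x.2) (mkHyp x'.1 x'.2) hxx (i : ℕ) (Nat.lt_succ_iff.mp i.isLt)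
    rw [U_eq x.1 (Nat.lt_succ_iff.mp i.isLt), U_eq x'.1 (Nat.lt_succ_iff.mp i.isLt)] at hui
    exact hui
  rw [hcard] at key
  exact key.trans hfinal
end
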